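/- arXiv:1712.02642 — 5 statements merged into one kernel-verified Lean document; each statement's English description precedes it below -/
import Mathlib

section
/- Let $\gamma$ be a skew shape with $m = |\gamma| \geq 4$ boxes, and suppose $\gamma$ admits a Littlewood–Richardson filling of type $(m-1,1)$. Then either $\gamma$ is a translate of the Young diagram of $(m-1,1)$, or the $180°$-rotation of $\gamma$ is a translate of the Young diagram of $(m-1,1)$, or $\gamma$ admits a Littlewood–Richardson filling of type $(m)$, $(m-2,2)$, or $(m-2,1,1)$. -/
/-- The cells of the (generalized) diagram with row lengths given by the list `l`. -/
def cellsOfRowLens (l : List ℕ) : Finset (ℕ × ℕ) :=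
  (Finset.range l.length).biUnion fun i => (Finset.range (l.getD i 0)).image fun j => (i, j)

/-- The shape `γ` is a translate of the shape `δ`. -/
def IsTranslateOf (γ δ : Finset (ℕ × ℕ)) : Prop :=
  ∃ a b : ℕ, γ = δ.image fun c => (c.1 + a, c.2 + b)

/-- The shape `γ` is a translate of the 180°-rotation of the shape `δ`. -/
def IsRotTranslateOf (γ δ : Finset (ℕ × ℕ)) : Prop :=
  ∃ a b : ℕ, (∀ c ∈ δ, c.1 ≤ a ∧ c.2 ≤ b) ∧ γ = δ.image fun c => (a - c.1, b - c.2)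

/-- A Littlewood–Richardson filling of the shape `γ`: entries are positive, weakly increase
along rows, strictly increase down columns, and the reading word (right to left along rows,
top to bottom) is a lattice (good) word. -/
def IsLRFilling (γ : Finset (ℕ × ℕ)) (T : ℕ × ℕ → ℕ) : Prop :=
  (∀ c ∈ γ, 1 ≤ T c) ∧
  (∀ c ∈ γ, ∀ c' ∈ γ, c.1 = c'.1 → c.2 ≤ c'.2 → T c ≤ T c') ∧
  (∀ c ∈ γ, ∀ c' ∈ γ, c.2 = c'.2 → c.1 < c'.1 → T c < T c') ∧
  ∀ c ∈ γ, 2 ≤ T c →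
    (γ.filter fun c' => (c'.1 < c.1 ∨ (c'.1 = c.1 ∧ c.2 < c'.2)) ∧ T c' = T c - 1).card >
    (γ.filter fun c' => (c'.1 < c.1 ∨ (c'.1 = c.1 ∧ c.2 < c'.2)) ∧ T c' = T c).card

/-- The filling `T` of the shape `γ` has type given by the list `l` of part sizes:
the number `v+1` appears exactly `l.getD v 0` times. -/
def IsTypeOfList (γ : Finset (ℕ × ℕ)) (T : ℕ × ℕ → ℕ) (l : List ℕ) : Prop :=
  ∀ v : ℕ, (γ.filter fun c => T c = v + 1).card = l.getD v 0

lemma typeTwoAux (γ : Finset (ℕ × ℕ)) (m : ℕ) (hm : m = γ.card) (u v : ℕ × ℕ)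
    (hu : u ∈ γ) (hv : v ∈ γ) (huv : u ≠ v) :
    IsTypeOfList γ (fun c => if c = u then 2 else if c = v then 2 else 1) [m - 2, 2] := by
  intro w
  match w with
  | 0 =>
    have h : (γ.filter fun c => (fun c => if c = u then 2 else if c = v then 2 else 1) c = 0 + 1)
        = γ \ {u, v} := by
      ext c
      simp only [Finset.mem_filter, Finset.mem_sdiff, Finset.mem_insert, Finset.mem_singleton]
      constructor
      · rintro ⟨hc, h⟩
        refine ⟨hc, ?_⟩
        split_ifs at h <;> simp_all
      · rintro ⟨hc, h⟩
        push_neg at h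
        simp [hc, h.1, h.2]
    rw [h, Finset.card_sdiff_of_subset (by simp [Finset.insert_subset_iff, hu, hv])]
    simp [Finset.card_pair huv, hm]
  | 1 =>
    have h : (γ.filter fun c => (fun c => if c = u then 2 else if c = v then 2 else 1) c = 1 + 1)
        = {u, v} := by
      ext c
      simp only [Finset.mem_filter, Finset.mem_insert, Finset.mem_singleton]
      constructor
      · rintro ⟨hc, h⟩
        split_ifs at h <;> simp_all
      · rintro (rfl | rfl) <;> simp [hu, hv]
    rw [h, Finset.card_pair huv]
    rfl
  | (w+2) =>
    have h : (γ.filter fun c => (fun c => if c = u then 2 else if c = v then 2 else 1) c = w + 2 + 1)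
        = ∅ := by
      apply Finset.filter_eq_empty_iff.mpr
      intro c _
      show ¬((if c = u then 2 else if c = v then 2 else 1) = w + 2 + 1)
      split_ifs <;> omega
    rw [h]
    rw [List.getD_eq_default] <;> simp

lemma typeThreeAux (γ : Finset (ℕ × ℕ)) (m : ℕ) (hm : m = γ.card) (u v : ℕ × ℕ)
    (hu : u ∈ γ) (hv : v ∈ γ) (huv : u ≠ v) :
    IsTypeOfList γ (fun c => if c = u then 3 else if c = v then 2 else 1) [m - 2, 1, 1] := by
  intro w
  match w with
  | 0 =>
    have h : (γ.filter fun c => (fun c => if c = u then 3 else if c = v then 2 else 1) c = 0 + 1)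
        = γ \ {u, v} := by
      ext c
      simp only [Finset.mem_filter, Finset.mem_sdiff, Finset.mem_insert, Finset.mem_singleton]
      constructor
      · rintro ⟨hc, h⟩
        refine ⟨hc, ?_⟩
        split_ifs at h <;> simp_all
      · rintro ⟨hc, h⟩
        push_neg at h
        simp [hc, h.1, h.2]
    rw [h, Finset.card_sdiff_of_subset (by simp [Finset.insert_subset_iff, hu, hv])]
    simp [Finset.card_pair huv, hm]
  | 1 =>
    have h : (γ.filter fun c => (fun c => if c = u then 3 else if c = v then 2 else 1) c = 1 + 1)
        = {v} := by
      ext c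
      simp only [Finset.mem_filter, Finset.mem_singleton]
      constructor
      · rintro ⟨hc, h⟩
        split_ifs at h <;> simp_all
      · rintro rfl
        refine ⟨hv, ?_⟩
        rw [if_neg (fun h => huv h.symm), if_pos rfl]
    rw [h]
    rfl
  | 2 =>
    have h : (γ.filter fun c => (fun c => if c = u then 3 else if c = v then 2 else 1) c = 2 + 1)
        = {u} := by
      ext c
      simp only [Finset.mem_filter, Finset.mem_singleton]
      constructor
      · rintro ⟨hc, h⟩
        split_ifs at h <;> simp_all
      · rintro rfl
        exact ⟨hu, if_pos rfl⟩
    rw [h]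
    rfl
  | (w+3) =>
    have h : (γ.filter fun c => (fun c => if c = u then 3 else if c = v then 2 else 1) c = w + 3 + 1)
        = ∅ := by
      apply Finset.filter_eq_empty_iff.mpr
      intro c _
      show ¬((if c = u then 3 else if c = v then 2 else 1) = w + 3 + 1)
      split_ifs <;> omega
    rw [h]
    rw [List.getD_eq_default] <;> simp

/-- if a skew shape `γ` with `m ≥ 4` boxes admits an LR filling of type
`(m-1,1)`, then `γ` or its 180°-rotation is a translate of the diagram of `(m-1,1)`,
or `γ` admits an LR filling of type `(m)`, `(m-2,2)` or `(m-2,1,1)`. -/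
theorem stmt5 (lam mu : YoungDiagram) (hsub : mu ≤ lam)
    (γ : Finset (ℕ × ℕ)) (hγ : γ = lam.cells \ mu.cells)
    (m : ℕ) (hm : m = γ.card) (h4 : 4 ≤ m)
    (T : ℕ × ℕ → ℕ) (hT : IsLRFilling γ T) (htype : IsTypeOfList γ T [m - 1, 1]) :
    IsTranslateOf γ (cellsOfRowLens [m - 1, 1]) ∨
    IsRotTranslateOf γ (cellsOfRowLens [m - 1, 1]) ∨
    ∃ T' : ℕ × ℕ → ℕ, IsLRFilling γ T' ∧
      (IsTypeOfList γ T' [m] ∨ IsTypeOfList γ T' [m - 2, 2] ∨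
        IsTypeOfList γ T' [m - 2, 1, 1]) := by
  classical
  obtain ⟨hpos, hrow, hcol, hlat⟩ := hT
  have hmemγ : ∀ c : ℕ × ℕ, c ∈ γ ↔ c ∈ lam ∧ c ∉ mu := by
    intro c
    rw [hγ, Finset.mem_sdiff, YoungDiagram.mem_cells, YoungDiagram.mem_cells]
  have hclosed : ∀ c ∈ γ, ∀ c' ∈ γ, ∀ d : ℕ × ℕ,
      c.1 ≤ d.1 → d.1 ≤ c'.1 → c.2 ≤ d.2 → d.2 ≤ c'.2 → d ∈ γ := by
    intro c hc c' hc' d h1 h2 h3 h4'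
    rw [hmemγ] at hc hc' ⊢
    constructor
    · have := lam.up_left_mem h2 h4' (show (c'.1, c'.2) ∈ lam from hc'.1)
      exact this
    · intro hd
      exact hc.2 (mu.up_left_mem h1 h3 (show (d.1, d.2) ∈ mu from hd))
  have hT12 : ∀ c ∈ γ, T c = 1 ∨ T c = 2 := by
    intro c hc
    by_contra hcon
    push_neg at hcon
    have h1 := hpos c hc
    have := htype (T c - 1)
    rw [List.getD_eq_default _ _ (by simp; omega)] at this
    have hcmem : c ∈ γ.filter fun c' => T c' = (T c - 1) + 1 :=
      Finset.mem_filter.mpr ⟨hc, by omega⟩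
    have := Finset.card_pos.mpr ⟨c, hcmem⟩
    omega
  have h2card : (γ.filter fun c => T c = 2).card = 1 := by
    have := htype 1
    simpa using this
  obtain ⟨x, hxfil⟩ := Finset.card_eq_one.mp h2card
  have hx : x ∈ γ ∧ T x = 2 := by
    have : x ∈ γ.filter fun c => T c = 2 := hxfil ▸ Finset.mem_singleton_self x
    exact Finset.mem_filter.mp this
  have hxγ := hx.1
  have hx_uniq : ∀ c ∈ γ, T c = 2 → c = x := by
    intro c hc h
    have : c ∈ γ.filter fun c => T c = 2 := Finset.mem_filter.mpr ⟨hc, h⟩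
    rw [hxfil] at this
    exact Finset.mem_singleton.mp this
  by_cases hsingle : ∀ c ∈ γ, ∀ c' ∈ γ, c.2 = c'.2 → c = c'
  · refine Or.inr (Or.inr ⟨fun _ => 1, ⟨?_, ?_, ?_, ?_⟩, Or.inl ?_⟩)
    · intro c _; exact le_refl 1
    · intro c _ c' _ _ _; exact le_refl 1
    · intro c hc c' hc' hcc hlt
      have := congrArg Prod.fst (hsingle c hc c' hc' hcc)
      omega
    · intro c _ h
      have h1 : (fun _ : ℕ × ℕ => 1) c = 1 := rfl
      omega
    · intro v
      match v with
      | 0 =>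
        rw [Finset.filter_true_of_mem (fun _ _ => rfl)]
        simpa using hm.symm
      | (v+1) =>
        rw [Finset.filter_false_of_mem (fun c _ => by show ¬(1 = v + 1 + 1); omega)]
        rw [List.getD_eq_default] <;> simp
  · push_neg at hsingle
    obtain ⟨c, hc, c', hc', hccol, hcne⟩ := hsingle
    have key : ∃ rr jj : ℕ, x = (rr + 1, jj) ∧ (rr, jj) ∈ γ := by
      have h1 : c.1 ≠ c'.1 := by
        intro h
        exact hcne (Prod.ext h hccol)
      have main : ∀ d ∈ γ, ∀ d' ∈ γ, d.2 = d'.2 → d.1 < d'.1 →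
          ∃ rr jj, x = (rr + 1, jj) ∧ (rr, jj) ∈ γ := by
        intro d hd d' hd' hcol2 hlt2
        have hTlt := hcol d hd d' hd' hcol2 hlt2
        have hd1 := hpos d hd
        have h2 : T d' = 2 := by rcases hT12 d' hd' with h | h <;> omega
        have hdx : d' = x := hx_uniq d' hd' h2
        rw [hdx] at hd' hcol2 hlt2
        refine ⟨x.1 - 1, x.2, Prod.ext (by show x.1 = x.1 - 1 + 1; omega) rfl, ?_⟩
        exact hclosed d hd x hxγ (x.1 - 1, x.2) (by show d.1 ≤ x.1 - 1; omega)
          (by show x.1 - 1 ≤ x.1; omega) (le_of_eq hcol2) (le_refl _)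
      rcases lt_or_gt_of_ne h1 with h | h
      · exact main c hc c' hc' hccol h
      · exact main c' hc' c hc hccol.symm h
    obtain ⟨r, j, hxeq, hyγ⟩ := key
    have hx1 : x.1 = r + 1 := by rw [hxeq]
    have hx2 : x.2 = j := by rw [hxeq]
    have hyne : (r, j) ≠ x := by
      intro h
      have := congrArg Prod.fst h
      simp [hx1] at this
    have F1 : ∀ d ∈ γ, ∀ d' ∈ γ, d.2 = d'.2 → d.1 < d'.1 → d' = x := by
      intro d hd d' hd' h1 h2
      have := hcol d hd d' hd' h1 h2
      have := hpos d hd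
      have h3 : T d' = 2 := by rcases hT12 d' hd' with h | h <;> omega
      exact hx_uniq d' hd' h3
    have Fcol : ∀ d ∈ γ, d.2 = j → d = (r, j) ∨ d = x := by
      intro d hd hdj
      rcases lt_trichotomy d.1 (r + 1) with h | h | h
      · rcases Nat.lt_or_ge d.1 r with h' | h'
        · have h5 := F1 d hd (r, j) hyγ (by simpa using hdj) (by simpa using h')
          rw [hxeq] at h5
          have := congrArg Prod.fst h5
          simp at this
        · left
          exact Prod.ext (by omega) hdj
      · right
        exact Prod.ext (by omega) (by rw [hdj, hx2])
      · have h5 := F1 x hxγ d hd (by rw [hx2, hdj]) (by omega)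
        have := congrArg Prod.fst h5
        omega
    have F2 : ∀ d ∈ γ, d.1 = r + 1 → d.2 ≤ j := by
      intro d hd h1
      by_contra h2
      push_neg at h2
      have hle := hrow x hxγ d hd (by omega) (by omega)
      have h3 : T d = 2 := by rcases hT12 d hd with h | h <;> omega
      have h5 := hx_uniq d hd h3
      have := congrArg Prod.snd h5
      omega
    have F3 : ∀ d ∈ γ, d.1 = r → j ≤ d.2 := by
      intro d hd h1
      by_contra h2
      push_neg at h2
      have hmem : (r + 1, d.2) ∈ γ :=
        hclosed d hd x hxγ (r + 1, d.2) (by simp; omega) (by simp; omega) (by simp) (by simp; omega)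
      have h5 := F1 d hd (r + 1, d.2) hmem rfl (by omega)
      have := congrArg Prod.snd h5
      simp [hx2] at this
      omega
    by_cases hb : ∃ d ∈ γ, r + 1 < d.1
    · -- Case 1: a cell below row r+1 exists; filling of type (m-2,1,1)
      obtain ⟨c1, hc1, hc1r⟩ := hb
      have hSne : ((γ.filter fun d => d.1 = c1.1).image Prod.snd).Nonempty :=
        ⟨c1.2, Finset.mem_image_of_mem _ (Finset.mem_filter.mpr ⟨hc1, rfl⟩)⟩
      obtain ⟨c0, hc0f, hc0J⟩ := Finset.mem_image.mp (Finset.max'_mem _ hSne)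
      obtain ⟨hc0γ, hc0row⟩ := Finset.mem_filter.mp hc0f
      have hc0max : ∀ d ∈ γ, d.1 = c1.1 → d.2 ≤ c0.2 := by
        intro d hd hdr
        rw [hc0J]
        exact Finset.le_max' _ _ (Finset.mem_image_of_mem _ (Finset.mem_filter.mpr ⟨hd, hdr⟩))
      have hc0x : c0 ≠ x := by
        intro h
        have h5 : c0.1 = x.1 := congrArg Prod.fst h
        omega
      have hyc0 : (r, j) ≠ c0 := by
        intro h
        have h5 : r = c0.1 := congrArg Prod.fst h
        omega
      refine Or.inr (Or.inr ⟨fun d => if d = c0 then 3 else if d = x then 2 else 1,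
        ⟨?_, ?_, ?_, ?_⟩, Or.inr (Or.inr (typeThreeAux γ m hm c0 x hc0γ hxγ hc0x))⟩)
      · intro d _
        beta_reduce
        split_ifs <;> omega
      · intro d hd d' hd' h1 h2
        beta_reduce
        by_cases hd'c0 : d' = c0
        · rw [if_pos hd'c0]
          split_ifs <;> omega
        · rw [if_neg hd'c0]
          by_cases hd'x : d' = x
          · rw [if_pos hd'x]
            have hdc0 : d ≠ c0 := by
              intro h
              rw [h, hd'x] at h1
              omega
            rw [if_neg hdc0]
            split_ifs <;> omega
          · rw [if_neg hd'x]
            have hdc0 : d ≠ c0 := by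
              intro h
              rw [h] at h1 h2
              have := hc0max d' hd' (by omega)
              exact hd'c0 (Prod.ext (by omega) (by omega)).symm
            have hdx : d ≠ x := by
              intro h
              rw [h] at h1 h2
              have hle := F2 d' hd' (by omega)
              rcases Fcol d' hd' (by omega) with hh | hh
              · have h5 : d'.1 = r := congrArg Prod.fst hh
                omega
              · exact hd'x hh
            rw [if_neg hdc0, if_neg hdx]
      · intro d hd d' hd' h1 h2
        have hd'x : d' = x := F1 d hd d' hd' h1 h2
        have hdy : d = (r, j) := by
          rcases Fcol d hd (by rw [h1, hd'x, hx2]) with hh | hh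
          · exact hh
          · rw [hd'x] at h2
            rw [hh] at h2
            omega
        rw [hdy, hd'x]
        beta_reduce
        rw [if_neg hyc0, if_neg hyne, if_neg (Ne.symm hc0x), if_pos rfl]
        omega
      · intro d hd h2d
        beta_reduce at h2d ⊢
        by_cases hdc0 : d = c0
        · rw [if_pos hdc0] at h2d ⊢
          rw [hdc0]
          have h0 : (γ.filter fun c' => (c'.1 < c0.1 ∨ c'.1 = c0.1 ∧ c0.2 < c'.2) ∧
              (if c' = c0 then 3 else if c' = x then 2 else 1) = 3).card = 0 := by
            rw [Finset.card_eq_zero]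
            apply Finset.filter_eq_empty_iff.mpr
            intro c' _ hcon
            obtain ⟨hbef, hval⟩ := hcon
            by_cases h : c' = c0
            · rw [h] at hbef
              rcases hbef with h' | h' <;> omega
            · rw [if_neg h] at hval
              split_ifs at hval <;> omega
          rw [h0]
          apply Finset.card_pos.mpr
          refine ⟨x, Finset.mem_filter.mpr ⟨hxγ, Or.inl (by omega), ?_⟩⟩
          rw [if_neg (Ne.symm hc0x), if_pos rfl]
        · rw [if_neg hdc0] at h2d ⊢
          by_cases hdx : d = x
          · rw [if_pos hdx] at h2d ⊢
            rw [hdx]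
            have h0 : (γ.filter fun c' => (c'.1 < x.1 ∨ c'.1 = x.1 ∧ x.2 < c'.2) ∧
                (if c' = c0 then 3 else if c' = x then 2 else 1) = 2).card = 0 := by
              rw [Finset.card_eq_zero]
              apply Finset.filter_eq_empty_iff.mpr
              intro c' _ hcon
              obtain ⟨hbef, hval⟩ := hcon
              by_cases h : c' = c0
              · rw [if_pos h] at hval
                omega
              · rw [if_neg h] at hval
                by_cases h' : c' = x
                · rw [h'] at hbef
                  rcases hbef with h'' | h'' <;> omega
                · rw [if_neg h'] at hval
                  omega
            rw [h0]
            apply Finset.card_pos.mpr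
            refine ⟨(r, j), Finset.mem_filter.mpr ⟨hyγ, Or.inl (by show r < x.1; omega), ?_⟩⟩
            rw [if_neg hyc0, if_neg hyne]
          · rw [if_neg hdx] at h2d
            omega
    · -- no cells below row r+1
      push_neg at hb
      by_cases ha : ∃ d ∈ γ, d.1 < r
      · obtain ⟨ca, hcaγ, hcar⟩ := ha
        by_cases hp : ∃ d ∈ γ, d.1 = r ∧ j < d.2
        · -- Case 2: cells above and row r has length ≥ 2: type (m-2,2)
          obtain ⟨cp, hcpγ, hcp1, hcp2⟩ := hp
          have hyf : (r, j) ∈ γ.filter fun d => d.1 = r := Finset.mem_filter.mpr ⟨hyγ, rfl⟩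
          have hSne : ((γ.filter fun d => d.1 = r).image Prod.snd).Nonempty :=
            ⟨j, Finset.mem_image_of_mem _ hyf⟩
          obtain ⟨c0, hc0f, hc0J⟩ := Finset.mem_image.mp (Finset.max'_mem _ hSne)
          obtain ⟨hc0γ, hc0row⟩ := Finset.mem_filter.mp hc0f
          have hc0max : ∀ d ∈ γ, d.1 = r → d.2 ≤ c0.2 := by
            intro d hd hdr
            rw [hc0J]
            exact Finset.le_max' _ _ (Finset.mem_image_of_mem _ (Finset.mem_filter.mpr ⟨hd, hdr⟩))
          have hc0j : j < c0.2 := lt_of_lt_of_le hcp2 (hc0max cp hcpγ hcp1)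
          have hc0x : c0 ≠ x := by
            intro h
            have h5 : c0.1 = x.1 := congrArg Prod.fst h
            omega
          have hyc0 : (r, j) ≠ c0 := by
            intro h
            have h5 : j = c0.2 := congrArg Prod.snd h
            omega
          have hca1 : ca ≠ c0 := by
            intro h
            have h5 : ca.1 = c0.1 := congrArg Prod.fst h
            omega
          have hca2 : ca ≠ x := by
            intro h
            have h5 : ca.1 = x.1 := congrArg Prod.fst h
            omega
          refine Or.inr (Or.inr ⟨fun d => if d = c0 then 2 else if d = x then 2 else 1,
            ⟨?_, ?_, ?_, ?_⟩, Or.inr (Or.inl (typeTwoAux γ m hm c0 x hc0γ hxγ hc0x))⟩)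
          · intro d _
            beta_reduce
            split_ifs <;> omega
          · intro d hd d' hd' h1 h2
            beta_reduce
            by_cases hd'c0 : d' = c0
            · rw [if_pos hd'c0]
              split_ifs <;> omega
            · rw [if_neg hd'c0]
              by_cases hd'x : d' = x
              · rw [if_pos hd'x]
                split_ifs <;> omega
              · rw [if_neg hd'x]
                have hdc0 : d ≠ c0 := by
                  intro h
                  rw [h] at h1 h2
                  have := hc0max d' hd' (by omega)
                  exact hd'c0 (Prod.ext (by omega) (by omega)).symm
                have hdx : d ≠ x := by
                  intro h
                  rw [h] at h1 h2
                  have hle := F2 d' hd' (by omega)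
                  rcases Fcol d' hd' (by omega) with hh | hh
                  · have h5 : d'.1 = r := congrArg Prod.fst hh
                    omega
                  · exact hd'x hh
                rw [if_neg hdc0, if_neg hdx]
          · intro d hd d' hd' h1 h2
            have hd'x : d' = x := F1 d hd d' hd' h1 h2
            have hdy : d = (r, j) := by
              rcases Fcol d hd (by rw [h1, hd'x, hx2]) with hh | hh
              · exact hh
              · rw [hd'x] at h2
                rw [hh] at h2
                omega
            rw [hdy, hd'x]
            beta_reduce
            rw [if_neg hyc0, if_neg hyne, if_neg (Ne.symm hc0x), if_pos rfl]
            omega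
          · intro d hd h2d
            beta_reduce at h2d ⊢
            by_cases hdc0 : d = c0
            · rw [if_pos hdc0] at h2d ⊢
              rw [hdc0]
              have h0 : (γ.filter fun c' => (c'.1 < c0.1 ∨ c'.1 = c0.1 ∧ c0.2 < c'.2) ∧
                  (if c' = c0 then 2 else if c' = x then 2 else 1) = 2).card = 0 := by
                rw [Finset.card_eq_zero]
                apply Finset.filter_eq_empty_iff.mpr
                intro c' _ hcon
                obtain ⟨hbef, hval⟩ := hcon
                by_cases h : c' = c0
                · rw [h] at hbef
                  rcases hbef with h' | h' <;> omega
                · rw [if_neg h] at hval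
                  by_cases h' : c' = x
                  · rw [h'] at hbef
                    rcases hbef with h'' | h'' <;> omega
                  · rw [if_neg h'] at hval
                    omega
              rw [h0]
              apply Finset.card_pos.mpr
              refine ⟨ca, Finset.mem_filter.mpr ⟨hcaγ, Or.inl (by omega), ?_⟩⟩
              rw [if_neg hca1, if_neg hca2]
            · rw [if_neg hdc0] at h2d ⊢
              by_cases hdx : d = x
              · rw [if_pos hdx] at h2d ⊢
                rw [hdx]
                have hcard1 : (γ.filter fun c' => (c'.1 < x.1 ∨ c'.1 = x.1 ∧ x.2 < c'.2) ∧
                    (if c' = c0 then 2 else if c' = x then 2 else 1) = 2).card ≤ 1 := by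
                  have hsub1 : (γ.filter fun c' => (c'.1 < x.1 ∨ c'.1 = x.1 ∧ x.2 < c'.2) ∧
                      (if c' = c0 then 2 else if c' = x then 2 else 1) = 2) ⊆ {c0} := by
                    intro c' hc'mem
                    obtain ⟨hc'γ, hbef, hval⟩ := Finset.mem_filter.mp hc'mem
                    by_cases h : c' = c0
                    · rw [h]
                      exact Finset.mem_singleton_self c0
                    · rw [if_neg h] at hval
                      by_cases h' : c' = x
                      · rw [h'] at hbef
                        rcases hbef with h'' | h'' <;> omega
                      · rw [if_neg h'] at hval
                        omega
                  exact (Finset.card_le_card hsub1).trans_eq (Finset.card_singleton c0)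
                have hne2 : ((r, j) : ℕ × ℕ) ≠ ca := by
                  intro h
                  have h5 : r = ca.1 := congrArg Prod.fst h
                  omega
                have hcard2 : 2 ≤ (γ.filter fun c' => (c'.1 < x.1 ∨ c'.1 = x.1 ∧ x.2 < c'.2) ∧
                    (if c' = c0 then 2 else if c' = x then 2 else 1) = 2 - 1).card := by
                  have hsub2 : ({(r, j), ca} : Finset (ℕ × ℕ)) ⊆
                      γ.filter fun c' => (c'.1 < x.1 ∨ c'.1 = x.1 ∧ x.2 < c'.2) ∧
                      (if c' = c0 then 2 else if c' = x then 2 else 1) = 2 - 1 := by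
                    intro c' hc'mem
                    rcases Finset.mem_insert.mp hc'mem with rfl | hc'mem
                    · refine Finset.mem_filter.mpr ⟨hyγ, Or.inl (by show r < x.1; omega), ?_⟩
                      rw [if_neg hyc0, if_neg hyne]
                    · rw [Finset.mem_singleton] at hc'mem
                      subst hc'mem
                      refine Finset.mem_filter.mpr ⟨hcaγ, Or.inl (by omega), ?_⟩
                      rw [if_neg hca1, if_neg hca2]
                  have := Finset.card_le_card hsub2
                  rwa [Finset.card_pair hne2] at this
                omega
              · rw [if_neg hdx] at h2d
                omega
        · -- Case 3: cells above and row r = {(r,j)}: type (m-2,1,1)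
          push_neg at hp
          have hrowr : ∀ d ∈ γ, d.1 = r → d = (r, j) := fun d hd h =>
            Prod.ext h (le_antisymm (hp d hd h) (F3 d hd h))
          have hca2 : ca ≠ x := by
            intro h
            have h5 : ca.1 = x.1 := congrArg Prod.fst h
            omega
          have hca3 : ca ≠ (r, j) := by
            intro h
            have h5 : ca.1 = r := congrArg Prod.fst h
            omega
          refine Or.inr (Or.inr ⟨fun d => if d = x then 3 else if d = (r, j) then 2 else 1,
            ⟨?_, ?_, ?_, ?_⟩, Or.inr (Or.inr (typeThreeAux γ m hm x (r, j) hxγ hyγ (Ne.symm hyne)))⟩)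
          · intro d _
            beta_reduce
            split_ifs <;> omega
          · intro d hd d' hd' h1 h2
            beta_reduce
            by_cases hd'x : d' = x
            · rw [if_pos hd'x]
              split_ifs <;> omega
            · rw [if_neg hd'x]
              by_cases hd'y : d' = (r, j)
              · rw [if_pos hd'y]
                have hdx : d ≠ x := by
                  intro h
                  rw [h, hd'y] at h1
                  have h5 : x.1 = r := h1
                  omega
                rw [if_neg hdx]
                split_ifs <;> omega
              · rw [if_neg hd'y]
                have hdx : d ≠ x := by
                  intro h
                  rw [h] at h1 h2
                  have hle := F2 d' hd' (by omega)
                  rcases Fcol d' hd' (by omega) with hh | hh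
                  · have h5 : d'.1 = r := congrArg Prod.fst hh
                    omega
                  · exact hd'x hh
                have hdy : d ≠ (r, j) := by
                  intro h
                  rw [h] at h1 h2
                  have h1' : r = d'.1 := h1
                  exact hd'y (hrowr d' hd' h1'.symm)
                rw [if_neg hdx, if_neg hdy]
          · intro d hd d' hd' h1 h2
            have hd'x : d' = x := F1 d hd d' hd' h1 h2
            have hdy : d = (r, j) := by
              rcases Fcol d hd (by rw [h1, hd'x, hx2]) with hh | hh
              · exact hh
              · rw [hd'x] at h2
                rw [hh] at h2
                omega
            rw [hdy, hd'x]
            beta_reduce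
            rw [if_neg hyne, if_pos rfl, if_pos rfl]
            omega
          · intro d hd h2d
            beta_reduce at h2d ⊢
            by_cases hdx : d = x
            · rw [if_pos hdx] at h2d ⊢
              rw [hdx]
              have h0 : (γ.filter fun c' => (c'.1 < x.1 ∨ c'.1 = x.1 ∧ x.2 < c'.2) ∧
                  (if c' = x then 3 else if c' = (r, j) then 2 else 1) = 3).card = 0 := by
                rw [Finset.card_eq_zero]
                apply Finset.filter_eq_empty_iff.mpr
                intro c' _ hcon
                obtain ⟨hbef, hval⟩ := hcon
                by_cases h : c' = x
                · rw [h] at hbef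
                  rcases hbef with h' | h' <;> omega
                · rw [if_neg h] at hval
                  split_ifs at hval <;> omega
              rw [h0]
              apply Finset.card_pos.mpr
              refine ⟨(r, j), Finset.mem_filter.mpr ⟨hyγ, Or.inl (by show r < x.1; omega), ?_⟩⟩
              rw [if_neg hyne, if_pos rfl]
            · rw [if_neg hdx] at h2d ⊢
              by_cases hdy : d = (r, j)
              · rw [if_pos hdy] at h2d ⊢
                have hd1 : d.1 = r := by rw [hdy]
                have hd2 : d.2 = j := by rw [hdy]
                have h0 : (γ.filter fun c' => (c'.1 < d.1 ∨ c'.1 = d.1 ∧ d.2 < c'.2) ∧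
                    (if c' = x then 3 else if c' = (r, j) then 2 else 1) = 2).card = 0 := by
                  rw [Finset.card_eq_zero]
                  apply Finset.filter_eq_empty_iff.mpr
                  intro c' _ hcon
                  obtain ⟨hbef, hval⟩ := hcon
                  by_cases h : c' = x
                  · rw [if_pos h] at hval
                    omega
                  · rw [if_neg h] at hval
                    by_cases h' : c' = (r, j)
                    · rw [h'] at hbef
                      have h5 : ((r, j) : ℕ × ℕ).1 = r := rfl
                      have h6 : ((r, j) : ℕ × ℕ).2 = j := rfl
                      rcases hbef with h'' | h'' <;> omega
                    · rw [if_neg h'] at hval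
                      omega
                rw [h0]
                apply Finset.card_pos.mpr
                refine ⟨ca, Finset.mem_filter.mpr ⟨hcaγ, Or.inl (by omega), ?_⟩⟩
                rw [if_neg hca2, if_neg hca3]
              · rw [if_neg hdy] at h2d
                omega
      · -- Case 4: all cells in rows r and r+1
        push_neg at ha
        have hcells : ∀ c : ℕ × ℕ,
            c ∈ cellsOfRowLens [m - 1, 1] ↔ (c.1 = 0 ∧ c.2 < m - 1) ∨ c = (1, 0) := by
          intro c'
          simp only [cellsOfRowLens, Finset.mem_biUnion, Finset.mem_range, Finset.mem_image,
            List.length_cons, List.length_nil]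
          constructor
          · rintro ⟨i, hi, j', hj', rfl⟩
            interval_cases i
            · exact Or.inl ⟨rfl, by simpa using hj'⟩
            · right
              have h5 : j' < 1 := by simpa using hj'
              have h6 : j' = 0 := by omega
              subst h6
              rfl
          · rintro (⟨h1, h2⟩ | rfl)
            · exact ⟨0, by omega, c'.2, by simpa using h2, Prod.ext h1.symm rfl⟩
            · exact ⟨1, by omega, 0, by simp, rfl⟩
        by_cases hq : ∃ d ∈ γ, d.1 = r + 1 ∧ d.2 < j
        · obtain ⟨cq, hcqγ, hcq1, hcq2⟩ := hq
          have hj1 : 1 ≤ j := by omega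
          obtain ⟨c0, hc0γ, hc01, hc02⟩ : ∃ c0 ∈ γ, c0.1 = r + 1 ∧ c0.2 = j - 1 :=
            ⟨(r + 1, j - 1), hclosed cq hcqγ x hxγ (r + 1, j - 1) (by show cq.1 ≤ r + 1; omega)
              (by show r + 1 ≤ x.1; omega) (by show cq.2 ≤ j - 1; omega)
              (by show j - 1 ≤ x.2; omega), rfl, rfl⟩
          have hc0x : c0 ≠ x := by
            intro h
            have h5 : c0.2 = x.2 := congrArg Prod.snd h
            omega
          have hyc0 : (r, j) ≠ c0 := by
            intro h
            have h5 : r = c0.1 := congrArg Prod.fst h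
            omega
          by_cases hp : ∃ d ∈ γ, d.1 = r ∧ j < d.2
          · -- Case 4a: type (m-2,2) with 2s at (r+1,j-1) and x
            obtain ⟨cp, hcpγ, hcp1, hcp2⟩ := hp
            have hcp3 : cp ≠ c0 := by
              intro h
              have h5 : cp.1 = c0.1 := congrArg Prod.fst h
              omega
            have hcp4 : cp ≠ x := by
              intro h
              have h5 : cp.1 = x.1 := congrArg Prod.fst h
              omega
            refine Or.inr (Or.inr ⟨fun d => if d = c0 then 2 else if d = x then 2 else 1,
              ⟨?_, ?_, ?_, ?_⟩, Or.inr (Or.inl (typeTwoAux γ m hm c0 x hc0γ hxγ hc0x))⟩)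
            · intro d _
              beta_reduce
              split_ifs <;> omega
            · intro d hd d' hd' h1 h2
              beta_reduce
              by_cases hd'c0 : d' = c0
              · rw [if_pos hd'c0]
                split_ifs <;> omega
              · rw [if_neg hd'c0]
                by_cases hd'x : d' = x
                · rw [if_pos hd'x]
                  split_ifs <;> omega
                · rw [if_neg hd'x]
                  have hdc0 : d ≠ c0 := by
                    intro h
                    rw [h] at h1 h2
                    have hle := F2 d' hd' (by omega)
                    by_cases hcase : d'.2 = j
                    · rcases Fcol d' hd' hcase with hh | hh
                      · have h5 : d'.1 = r := congrArg Prod.fst hh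
                        omega
                      · exact hd'x hh
                    · exact hd'c0 (Prod.ext (by omega) (by omega)).symm
                  have hdx : d ≠ x := by
                    intro h
                    rw [h] at h1 h2
                    have hle := F2 d' hd' (by omega)
                    rcases Fcol d' hd' (by omega) with hh | hh
                    · have h5 : d'.1 = r := congrArg Prod.fst hh
                      omega
                    · exact hd'x hh
                  rw [if_neg hdc0, if_neg hdx]
            · intro d hd d' hd' h1 h2
              have hd'x : d' = x := F1 d hd d' hd' h1 h2
              have hdy : d = (r, j) := by
                rcases Fcol d hd (by rw [h1, hd'x, hx2]) with hh | hh
                · exact hh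
                · rw [hd'x] at h2
                  rw [hh] at h2
                  omega
              rw [hdy, hd'x]
              beta_reduce
              rw [if_neg hyc0, if_neg hyne, if_neg (Ne.symm hc0x), if_pos rfl]
              omega
            · intro d hd h2d
              beta_reduce at h2d ⊢
              by_cases hdc0 : d = c0
              · rw [if_pos hdc0] at h2d ⊢
                rw [hdc0]
                have hcard1 : (γ.filter fun c' => (c'.1 < c0.1 ∨ c'.1 = c0.1 ∧ c0.2 < c'.2) ∧
                    (if c' = c0 then 2 else if c' = x then 2 else 1) = 2).card ≤ 1 := by
                  have hsub1 : (γ.filter fun c' => (c'.1 < c0.1 ∨ c'.1 = c0.1 ∧ c0.2 < c'.2) ∧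
                      (if c' = c0 then 2 else if c' = x then 2 else 1) = 2) ⊆ {x} := by
                    intro c' hc'mem
                    obtain ⟨hc'γ, hbef, hval⟩ := Finset.mem_filter.mp hc'mem
                    by_cases h : c' = c0
                    · rw [h] at hbef
                      rcases hbef with h' | h' <;> omega
                    · rw [if_neg h] at hval
                      by_cases h' : c' = x
                      · rw [h']
                        exact Finset.mem_singleton_self x
                      · rw [if_neg h'] at hval
                        omega
                  exact (Finset.card_le_card hsub1).trans_eq (Finset.card_singleton x)
                have hne2 : ((r, j) : ℕ × ℕ) ≠ cp := by
                  intro h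
                  have h5 : j = cp.2 := congrArg Prod.snd h
                  omega
                have hcard2 : 2 ≤ (γ.filter fun c' => (c'.1 < c0.1 ∨ c'.1 = c0.1 ∧ c0.2 < c'.2) ∧
                    (if c' = c0 then 2 else if c' = x then 2 else 1) = 2 - 1).card := by
                  have hsub2 : ({(r, j), cp} : Finset (ℕ × ℕ)) ⊆
                      γ.filter fun c' => (c'.1 < c0.1 ∨ c'.1 = c0.1 ∧ c0.2 < c'.2) ∧
                      (if c' = c0 then 2 else if c' = x then 2 else 1) = 2 - 1 := by
                    intro c' hc'mem
                    rcases Finset.mem_insert.mp hc'mem with rfl | hc'mem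
                    · refine Finset.mem_filter.mpr ⟨hyγ, Or.inl (by show r < c0.1; omega), ?_⟩
                      rw [if_neg hyc0, if_neg hyne]
                    · rw [Finset.mem_singleton] at hc'mem
                      subst hc'mem
                      refine Finset.mem_filter.mpr ⟨hcpγ, Or.inl (by omega), ?_⟩
                      rw [if_neg hcp3, if_neg hcp4]
                  have := Finset.card_le_card hsub2
                  rwa [Finset.card_pair hne2] at this
                omega
              · rw [if_neg hdc0] at h2d ⊢
                by_cases hdx : d = x
                · rw [if_pos hdx] at h2d ⊢
                  rw [hdx]
                  have h0 : (γ.filter fun c' => (c'.1 < x.1 ∨ c'.1 = x.1 ∧ x.2 < c'.2) ∧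
                      (if c' = c0 then 2 else if c' = x then 2 else 1) = 2).card = 0 := by
                    rw [Finset.card_eq_zero]
                    apply Finset.filter_eq_empty_iff.mpr
                    intro c' _ hcon
                    obtain ⟨hbef, hval⟩ := hcon
                    by_cases h : c' = c0
                    · rw [h] at hbef
                      rcases hbef with h' | h' <;> omega
                    · rw [if_neg h] at hval
                      by_cases h' : c' = x
                      · rw [h'] at hbef
                        rcases hbef with h'' | h'' <;> omega
                      · rw [if_neg h'] at hval
                        omega
                  rw [h0]
                  apply Finset.card_pos.mpr
                  refine ⟨(r, j), Finset.mem_filter.mpr ⟨hyγ, Or.inl (by show r < x.1; omega), ?_⟩⟩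
                  rw [if_neg hyc0, if_neg hyne]
                · rw [if_neg hdx] at h2d
                  omega
          · -- Case 4b: rotated translate of (m-1,1)
            push_neg at hp
            have hrowr : ∀ d ∈ γ, d.1 = r → d = (r, j) := fun d hd h =>
              Prod.ext h (le_antisymm (hp d hd h) (F3 d hd h))
            have hxf : x ∈ γ.filter fun d => d.1 = r + 1 := Finset.mem_filter.mpr ⟨hxγ, hx1⟩
            have hSne : ((γ.filter fun d => d.1 = r + 1).image Prod.snd).Nonempty :=
              ⟨x.2, Finset.mem_image_of_mem _ hxf⟩
            obtain ⟨cK, hcKf, hcKJ⟩ := Finset.mem_image.mp (Finset.min'_mem _ hSne)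
            obtain ⟨hcKγ, hcKrow⟩ := Finset.mem_filter.mp hcKf
            have hcKmin : ∀ d ∈ γ, d.1 = r + 1 → cK.2 ≤ d.2 := by
              intro d hd hdr
              rw [hcKJ]
              exact Finset.min'_le _ _ (Finset.mem_image_of_mem _ (Finset.mem_filter.mpr ⟨hd, hdr⟩))
            have hKj : cK.2 ≤ j := by
              have := hcKmin x hxγ hx1
              omega
            have hIcc : ∀ i : ℕ, cK.2 ≤ i → i ≤ j → (r + 1, i) ∈ γ := by
              intro i h1 h2
              exact hclosed cK hcKγ x hxγ (r + 1, i) (by show cK.1 ≤ r + 1; omega)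
                (by show r + 1 ≤ x.1; omega) (by show cK.2 ≤ i; omega) (by show i ≤ x.2; omega)
            have hSeq : (γ.filter fun d => d.1 = r + 1)
                = (Finset.Icc cK.2 j).image fun i => (r + 1, i) := by
              ext d
              simp only [Finset.mem_filter, Finset.mem_image, Finset.mem_Icc]
              constructor
              · rintro ⟨hd, hdr⟩
                exact ⟨d.2, ⟨hcKmin d hd hdr, F2 d hd hdr⟩, Prod.ext hdr.symm rfl⟩
              · rintro ⟨i, ⟨h1, h2⟩, rfl⟩
                exact ⟨hIcc i h1 h2, rfl⟩
            have hScard : (γ.filter fun d => d.1 = r + 1).card = j + 1 - cK.2 := by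
              rw [hSeq, Finset.card_image_of_injective _ (fun a b h => congrArg Prod.snd h),
                Nat.card_Icc]
            have hynS : (r, j) ∉ γ.filter fun d => d.1 = r + 1 := by
              intro h
              have h5 : r = r + 1 := (Finset.mem_filter.mp h).2
              omega
            have hγeq : γ = insert (r, j) (γ.filter fun d => d.1 = r + 1) := by
              ext d
              simp only [Finset.mem_insert, Finset.mem_filter]
              constructor
              · intro hd
                have h1 := ha d hd
                have h2 := hb d hd
                by_cases h : d.1 = r
                · exact Or.inl (hrowr d hd h)
                · exact Or.inr ⟨hd, by omega⟩
              · rintro (rfl | ⟨hd, _⟩)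
                · exact hyγ
                · exact hd
            have hcard : j = cK.2 + (m - 2) := by
              have h5 := Finset.card_insert_of_notMem hynS
              rw [← hγeq] at h5
              omega
            refine Or.inr (Or.inl ⟨r + 1, j, ?_, ?_⟩)
            · intro c' hc'
              rcases (hcells c').mp hc' with ⟨h1, h2⟩ | rfl
              · exact ⟨by omega, by omega⟩
              · exact ⟨by show (1 : ℕ) ≤ r + 1; omega, by show (0 : ℕ) ≤ j; omega⟩
            · ext d
              rw [Finset.mem_image]
              constructor
              · intro hd
                have h1 := ha d hd
                have h2 := hb d hd
                by_cases h : d.1 = r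
                · have hdy := hrowr d hd h
                  refine ⟨(1, 0), (hcells (1, 0)).mpr (Or.inr rfl), ?_⟩
                  show (r + 1 - 1, j - 0) = d
                  rw [hdy]
                  exact Prod.ext (by show r + 1 - 1 = r; omega) (by show j - 0 = j; omega)
                · have hdr : d.1 = r + 1 := by omega
                  have h3 := hcKmin d hd hdr
                  have h4' := F2 d hd hdr
                  refine ⟨(0, j - d.2), (hcells (0, j - d.2)).mpr
                    (Or.inl ⟨rfl, by show j - d.2 < m - 1; omega⟩), ?_⟩
                  show (r + 1 - 0, j - (j - d.2)) = d
                  exact Prod.ext (by show r + 1 - 0 = d.1; omega)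
                    (by show j - (j - d.2) = d.2; omega)
              · rintro ⟨c', hc', rfl⟩
                rcases (hcells c').mp hc' with ⟨h1, h2⟩ | rfl
                · show (r + 1 - c'.1, j - c'.2) ∈ γ
                  have heq : (r + 1 - c'.1, j - c'.2) = (r + 1, j - c'.2) :=
                    Prod.ext (by show r + 1 - c'.1 = r + 1; omega) rfl
                  rw [heq]
                  exact hIcc _ (by omega) (by omega)
                · show (r + 1 - 1, j - 0) ∈ γ
                  have heq : ((r + 1 - 1 : ℕ), j - 0) = ((r : ℕ), j) :=
                    Prod.ext (by show r + 1 - 1 = r; omega) (by show j - 0 = j; omega)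
                  rw [heq]
                  exact hyγ
        · -- Case 4c: translate of (m-1,1)
          push_neg at hq
          have hrow1 : ∀ d ∈ γ, d.1 = r + 1 → d = x := by
            intro d hd h
            have h1 := F2 d hd h
            have h2 := hq d hd h
            rcases Fcol d hd (by omega) with hh | hh
            · have h5 : d.1 = r := congrArg Prod.fst hh
              omega
            · exact hh
          have hyf : (r, j) ∈ γ.filter fun d => d.1 = r := Finset.mem_filter.mpr ⟨hyγ, rfl⟩
          have hSne : ((γ.filter fun d => d.1 = r).image Prod.snd).Nonempty :=
            ⟨j, Finset.mem_image_of_mem _ hyf⟩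
          obtain ⟨c0, hc0f, hc0J⟩ := Finset.mem_image.mp (Finset.max'_mem _ hSne)
          obtain ⟨hc0γ, hc0row⟩ := Finset.mem_filter.mp hc0f
          have hc0max : ∀ d ∈ γ, d.1 = r → d.2 ≤ c0.2 := by
            intro d hd hdr
            rw [hc0J]
            exact Finset.le_max' _ _ (Finset.mem_image_of_mem _ (Finset.mem_filter.mpr ⟨hd, hdr⟩))
          have hjc0 : j ≤ c0.2 := hc0max (r, j) hyγ rfl
          have hIcc : ∀ i : ℕ, j ≤ i → i ≤ c0.2 → (r, i) ∈ γ := by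
            intro i h1 h2
            exact hclosed (r, j) hyγ c0 hc0γ (r, i) (by show r ≤ r; omega)
              (by show r ≤ c0.1; omega) (by show j ≤ i; omega) (by show i ≤ c0.2; omega)
          have hSeq : (γ.filter fun d => d.1 = r) = (Finset.Icc j c0.2).image fun i => (r, i) := by
            ext d
            simp only [Finset.mem_filter, Finset.mem_image, Finset.mem_Icc]
            constructor
            · rintro ⟨hd, hdr⟩
              exact ⟨d.2, ⟨F3 d hd hdr, hc0max d hd hdr⟩, Prod.ext hdr.symm rfl⟩
            · rintro ⟨i, ⟨h1, h2⟩, rfl⟩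
              exact ⟨hIcc i h1 h2, rfl⟩
          have hScard : (γ.filter fun d => d.1 = r).card = c0.2 + 1 - j := by
            rw [hSeq, Finset.card_image_of_injective _ (fun a b h => congrArg Prod.snd h),
              Nat.card_Icc]
          have hxnS : x ∉ γ.filter fun d => d.1 = r := by
            intro h
            have h5 := (Finset.mem_filter.mp h).2
            omega
          have hγeq : γ = insert x (γ.filter fun d => d.1 = r) := by
            ext d
            simp only [Finset.mem_insert, Finset.mem_filter]
            constructor
            · intro hd
              have h1 := ha d hd
              have h2 := hb d hd
              by_cases h : d.1 = r + 1
              · exact Or.inl (hrow1 d hd h)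
              · exact Or.inr ⟨hd, by omega⟩
            · rintro (rfl | ⟨hd, _⟩)
              · exact hxγ
              · exact hd
          have hcard : c0.2 = j + (m - 2) := by
            have h5 := Finset.card_insert_of_notMem hxnS
            rw [← hγeq] at h5
            omega
          refine Or.inl ⟨r, j, ?_⟩
          ext d
          rw [Finset.mem_image]
          constructor
          · intro hd
            have h1 := ha d hd
            have h2 := hb d hd
            by_cases h : d.1 = r + 1
            · have hdx := hrow1 d hd h
              refine ⟨(1, 0), (hcells (1, 0)).mpr (Or.inr rfl), ?_⟩
              show ((1 : ℕ) + r, (0 : ℕ) + j) = d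
              rw [hdx, hxeq]
              exact Prod.ext (by show 1 + r = r + 1; omega) (by show 0 + j = j; omega)
            · have hdr : d.1 = r := by omega
              have h3 := F3 d hd hdr
              have h4' := hc0max d hd hdr
              refine ⟨(0, d.2 - j), (hcells (0, d.2 - j)).mpr
                (Or.inl ⟨rfl, by show d.2 - j < m - 1; omega⟩), ?_⟩
              show ((0 : ℕ) + r, d.2 - j + j) = d
              exact Prod.ext (by show 0 + r = d.1; omega) (by show d.2 - j + j = d.2; omega)
          · rintro ⟨c', hc', rfl⟩
            rcases (hcells c').mp hc' with ⟨h1, h2⟩ | rfl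
            · show (c'.1 + r, c'.2 + j) ∈ γ
              have heq : (c'.1 + r, c'.2 + j) = (r, c'.2 + j) :=
                Prod.ext (by show c'.1 + r = r; omega) rfl
              rw [heq]
              exact hIcc _ (by omega) (by omega)
            · show ((1 : ℕ) + r, (0 : ℕ) + j) ∈ γ
              have heq : (((1 : ℕ) + r : ℕ), ((0 : ℕ) + j : ℕ)) = x := by
                rw [hxeq]
                exact Prod.ext (by show 1 + r = r + 1; omega) (by show 0 + j = j; omega)
              rw [heq]
              exact hxγ
end

section
/- Let $\mu \subsetneq \lambda$ be partitions. The following are equivalent: (i) the skew shape $[\lambda \setminus \mu]$ admits Littlewood–Richardson fillings of exactly one type; (ii) there is a unique Littlewood–Richardson filling of $[\lambda \setminus \mu]$; (iii) $[\lambda \setminus \mu]$ is a translate of a Young diagram of some partition $\nu$ of $|\lambda| - |\mu|$, or its $180°$-rotation is. -/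
open Finset

namespace LRaux

lemma lat_exists {γ : Finset (ℕ × ℕ)} {T : ℕ × ℕ → ℕ} (hT : IsLRFilling γ T)
    {c : ℕ × ℕ} (hc : c ∈ γ) (h2 : 2 ≤ T c) :
    ∃ c' ∈ γ, (c'.1 < c.1 ∨ (c'.1 = c.1 ∧ c.2 < c'.2)) ∧ T c' = T c - 1 := by
  have h := hT.2.2.2 c hc h2
  have hpos : 0 < (γ.filter fun c' => (c'.1 < c.1 ∨ (c'.1 = c.1 ∧ c.2 < c'.2)) ∧ T c' = T c - 1).card :=
    lt_of_le_of_lt (Nat.zero_le _) h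
  obtain ⟨c', hc'⟩ := Finset.card_pos.mp hpos
  rw [Finset.mem_filter] at hc'
  exact ⟨c', hc'.1, hc'.2.1, hc'.2.2⟩

lemma unique_straight (ν : YoungDiagram) (a b : ℕ) (T : ℕ × ℕ → ℕ)
    (hT : IsLRFilling (ν.cells.image fun c => (c.1 + a, c.2 + b)) T) :
    ∀ k l : ℕ, (k, l) ∈ ν → T (k + a, l + b) = k + 1 := by
  set γ : Finset (ℕ × ℕ) := ν.cells.image fun c => (c.1 + a, c.2 + b) with hγ
  have hmem : ∀ k l : ℕ, (k, l) ∈ ν → (k + a, l + b) ∈ γ := by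
    intro k l h
    exact Finset.mem_image.mpr ⟨(k, l), (YoungDiagram.mem_cells _).mpr h, rfl⟩
  have hrep : ∀ c ∈ γ, ∃ k l : ℕ, (k, l) ∈ ν ∧ c = (k + a, l + b) := by
    intro c hc
    obtain ⟨d, hd, hdc⟩ := Finset.mem_image.mp hc
    exact ⟨d.1, d.2, (YoungDiagram.mem_cells _).mp hd, hdc.symm⟩
  intro k
  induction k using Nat.strong_induction_on with
  | _ k IH =>
    intro l hkl
    have lower : ∀ k' : ℕ, k' ≤ k → k' + 1 ≤ T (k' + a, l + b) := by
      intro k'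
      induction k' with
      | zero =>
        intro _
        exact hT.1 _ (hmem 0 l (ν.up_left_mem (Nat.zero_le _) le_rfl hkl))
      | succ n ihn =>
        intro h
        have h1 : n + 1 ≤ T (n + a, l + b) := ihn (Nat.le_of_succ_le h)
        have hcol : T (n + a, l + b) < T (n + 1 + a, l + b) := by
          refine hT.2.2.1 _ (hmem n l (ν.up_left_mem (by omega) le_rfl hkl))
            _ (hmem (n+1) l (ν.up_left_mem (by omega) le_rfl hkl)) rfl (by omega)
        omega
    have hub : T (k + a, l + b) < k + 2 := by
      by_contra hge
      push_neg at hge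
      obtain ⟨c', hc'γ, hearl, hval⟩ := lat_exists hT (hmem k l hkl) (by omega)
      obtain ⟨k', l', hk'l', rfl⟩ := hrep c' hc'γ
      simp only at hearl hval
      rcases hearl with h1 | ⟨h1, h2⟩
      · have hk' : k' < k := by omega
        have := IH k' hk' l' hk'l'
        omega
      · -- same row, c' to the right: T c ≤ T c' = T c - 1, contradiction
        have hrow : T (k + a, l + b) ≤ T (k' + a, l' + b) :=
          hT.2.1 _ (hmem k l hkl) _ (hmem k' l' hk'l') (by omega) (by omega)
        omega
    have := lower k le_rfl
    omega


lemma unique_rot (ν : YoungDiagram) (a b : ℕ) (hb : ∀ c ∈ ν.cells, c.1 ≤ a ∧ c.2 ≤ b)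
    (T : ℕ × ℕ → ℕ)
    (hT : IsLRFilling (ν.cells.image fun c => (a - c.1, b - c.2)) T) :
    ∀ k j : ℕ, (k, j) ∈ ν → T (a - k, b - j) = ν.colLen j - k := by
  set γ : Finset (ℕ × ℕ) := ν.cells.image fun c => (a - c.1, b - c.2) with hγ
  have hbd : ∀ k j : ℕ, (k, j) ∈ ν → k ≤ a ∧ j ≤ b := by
    intro k j h; exact hb (k, j) ((YoungDiagram.mem_cells _).mpr h)
  have hmem : ∀ k j : ℕ, (k, j) ∈ ν → (a - k, b - j) ∈ γ := by
    intro k j h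
    exact Finset.mem_image.mpr ⟨(k, j), (YoungDiagram.mem_cells _).mpr h, rfl⟩
  have hrep : ∀ c ∈ γ, ∃ k j : ℕ, (k, j) ∈ ν ∧ c = (a - k, b - j) := by
    intro c hc
    obtain ⟨d, hd, hdc⟩ := Finset.mem_image.mp hc
    exact ⟨d.1, d.2, (YoungDiagram.mem_cells _).mp hd, hdc.symm⟩
  -- lower bound, for every cell
  have lower : ∀ d k j : ℕ, (k + d, j) ∈ ν → d + 1 ≤ T (a - k, b - j) := by
    intro d
    induction d with
    | zero =>
      intro k j h
      exact hT.1 _ (hmem k j (by simpa using h))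
    | succ n ihn =>
      intro k j h
      have h1 : (k + 1 + n, j) ∈ ν := by
        have heq : k + (n+1) = k + 1 + n := by omega
        rwa [heq] at h
      have h2 : n + 1 ≤ T (a - (k+1), b - j) := ihn (k+1) j h1
      have hkmem : (k, j) ∈ ν := ν.up_left_mem (by omega) le_rfl h
      have hk1mem : (k + 1, j) ∈ ν := ν.up_left_mem (by omega) le_rfl h
      have hka : k + 1 ≤ a := (hbd _ _ hk1mem).1
      have hcol : T (a - (k+1), b - j) < T (a - k, b - j) := by
        refine hT.2.2.1 _ (hmem (k+1) j hk1mem) _ (hmem k j hkmem) rfl (by simp only; omega)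
      omega
  -- measure comparison
  have hmeas : ∀ k j k' j' : ℕ, k ≤ a → j ≤ b → k' ≤ a → j' ≤ b →
      (a - k' < a - k ∨ (a - k' = a - k ∧ b - j < b - j')) →
      (a - k') * (b + 1) + j' < (a - k) * (b + 1) + j := by
    intro k j k' j' hka hjb hk'a hj'b hearl
    rcases hearl with h1 | ⟨h1, h2⟩
    · have e1 : (a - k') * (b+1) + j' < (a - k' + 1) * (b + 1) := by
        have : (a - k' + 1) * (b+1) = (a-k')*(b+1) + (b+1) := by ring
        omega
      have e2 : (a - k' + 1) * (b + 1) ≤ (a - k) * (b+1) :=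
        Nat.mul_le_mul_right _ (by omega)
      omega
    · rw [h1]
      omega
  have main : ∀ n k j : ℕ, (k, j) ∈ ν → (a - k) * (b + 1) + j = n →
      T (a - k, b - j) = ν.colLen j - k := by
    intro n
    induction n using Nat.strong_induction_on with
    | _ n IH =>
      intro k j hkj hn
      have hka : k ≤ a := (hbd _ _ hkj).1
      have hjb : j ≤ b := (hbd _ _ hkj).2
      have hkcol : k < ν.colLen j := YoungDiagram.mem_iff_lt_colLen.mp hkj
      -- IH for all cells read earlier
      have IH' : ∀ k' j' : ℕ, (k', j') ∈ ν →
          ((a - k' < a - k ∨ (a - k' = a - k ∧ b - j < b - j'))) →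
          T (a - k', b - j') = ν.colLen j' - k' := by
        intro k' j' h hearl
        exact IH _ (hn ▸ hmeas k j k' j' hka hjb (hbd _ _ h).1 (hbd _ _ h).2 hearl) k' j' h rfl
      have hlow : ν.colLen j - k ≤ T (a - k, b - j) := by
        have := lower (ν.colLen j - 1 - k) k j (by
          have heq : k + (ν.colLen j - 1 - k) = ν.colLen j - 1 := by omega
          rw [heq]
          exact YoungDiagram.mem_iff_lt_colLen.mpr (by omega))
        omega
      -- upper bound by contradiction
      by_contra hne
      set v := T (a - k, b - j) with hvdef
      have hv : ν.colLen j - k + 1 ≤ v := by omega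
      have hv2 : 2 ≤ v := by omega
      have hlat' := hT.2.2.2 _ (hmem k j hkj) hv2
      have hlat : (γ.filter fun c' => (c'.1 < a - k ∨ (c'.1 = a - k ∧ b - j < c'.2)) ∧ T c' = v - 1).card >
          (γ.filter fun c' => (c'.1 < a - k ∨ (c'.1 = a - k ∧ b - j < c'.2)) ∧ T c' = v).card := hlat'
      -- row fact (†): cells to the right in the same row have value ≥ v
      have hdag : ∀ j'' : ℕ, j'' < j → (k, j'') ∈ ν → v + k ≤ ν.colLen j'' := by
        intro j'' hj'' hmem''
        have hj''b : j'' ≤ b := (hbd _ _ hmem'').2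
        have hval : T (a - k, b - j'') = ν.colLen j'' - k :=
          IH' k j'' hmem'' (Or.inr ⟨rfl, by omega⟩)
        have hrow : T (a - k, b - j) ≤ T (a - k, b - j'') :=
          hT.2.1 _ (hmem k j hkj) _ (hmem k j'' hmem'') rfl (by simp only; omega)
        have : k < ν.colLen j'' := YoungDiagram.mem_iff_lt_colLen.mp hmem''
        omega
      -- injection from (v-1)-cells to v-cells
      have hinj : (γ.filter fun c' => (c'.1 < a - k ∨ (c'.1 = a - k ∧ b - j < c'.2)) ∧ T c' = v - 1).card ≤
          (γ.filter fun c' => (c'.1 < a - k ∨ (c'.1 = a - k ∧ b - j < c'.2)) ∧ T c' = v).card := by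
        apply Finset.card_le_card_of_injOn (fun c' => (c'.1 + 1, c'.2))
        · -- maps into target
          intro c' hc'
          rw [Finset.mem_coe, Finset.mem_filter] at hc'
          obtain ⟨hc'γ, hearl, hval⟩ := hc'
          obtain ⟨k', j', hk'j', rfl⟩ := hrep c' hc'γ
          have hk'a : k' ≤ a := (hbd _ _ hk'j').1
          have hj'b : j' ≤ b := (hbd _ _ hk'j').2
          have hvaleq : ν.colLen j' - k' = v - 1 := by
            rw [← IH' k' j' hk'j' (by simpa using hearl)]
            exact hval
          have hk'col : k' < ν.colLen j' := YoungDiagram.mem_iff_lt_colLen.mp hk'j'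
          simp only at hearl ⊢
          -- establish j' < j
          have hj'j : j' < j := by
            rcases Nat.lt_trichotomy j' j with h | h | h
            · exact h
            · exfalso
              have hanti : ν.colLen j' = ν.colLen j := by rw [h]
              rcases hearl with h1 | ⟨h1, h2⟩
              · omega
              · omega
            · exfalso
              have hanti : ν.colLen j' ≤ ν.colLen j := ν.colLen_anti j j' (le_of_lt h)
              rcases hearl with h1 | ⟨h1, h2⟩
              · omega
              · omega
          -- establish k' > k
          have hk'k : k < k' := by
            rcases hearl with h1 | ⟨h1, h2⟩
            · omega
            · exfalso
              have hkk' : k' = k := by omega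
              subst hkk'
              have := hdag j' hj'j hk'j'
              omega
          -- now the image cell
          have hmem2 : (k' - 1, j') ∈ ν := ν.up_left_mem (by omega) le_rfl hk'j'
          have himg : ((a : ℕ) - k' + 1, b - j') = (a - (k' - 1), b - j') := by
            have heq : a - k' + 1 = a - (k' - 1) := by omega
            rw [heq]
          rw [Finset.mem_coe, Finset.mem_filter]
          refine ⟨by rw [himg]; exact hmem (k'-1) j' hmem2, ?_, ?_⟩
          · rcases Nat.eq_or_lt_of_le (show k ≤ k' - 1 by omega) with h1 | h1
            · right
              exact ⟨by omega, by omega⟩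
            · left; omega
          · rw [himg]
            rw [IH' (k' - 1) j' hmem2 (by
              rcases Nat.eq_or_lt_of_le (show k ≤ k' - 1 by omega) with h1 | h1
              · right
                exact ⟨by omega, by omega⟩
              · left; omega)]
            omega
        · -- injective
          intro c₁ h₁ c₂ h₂ heq
          simp only [Finset.mem_coe, Finset.mem_filter] at h₁ h₂
          obtain ⟨k₁, j₁, hm₁, rfl⟩ := hrep c₁ h₁.1
          obtain ⟨k₂, j₂, hm₂, rfl⟩ := hrep c₂ h₂.1
          simp only [Prod.mk.injEq] at heq ⊢
          exact ⟨by omega, heq.2⟩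
      omega
  intro k j h
  exact main _ k j h rfl


/-- The column filling: cell `(i,j)` gets value `i + 1 - mu.colLen j`. -/
def Tcol (mu : YoungDiagram) : ℕ × ℕ → ℕ := fun c => c.1 + 1 - mu.colLen c.2

lemma mem_skew_col {lam mu : YoungDiagram} {i j : ℕ} :
    (i, j) ∈ lam.cells \ mu.cells ↔ mu.colLen j ≤ i ∧ i < lam.colLen j := by
  rw [Finset.mem_sdiff, YoungDiagram.mem_cells, YoungDiagram.mem_cells,
    YoungDiagram.mem_iff_lt_colLen, YoungDiagram.mem_iff_lt_colLen]
  omega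

lemma mem_skew_row {lam mu : YoungDiagram} {i j : ℕ} :
    (i, j) ∈ lam.cells \ mu.cells ↔ mu.rowLen i ≤ j ∧ j < lam.rowLen i := by
  rw [Finset.mem_sdiff, YoungDiagram.mem_cells, YoungDiagram.mem_cells,
    YoungDiagram.mem_iff_lt_rowLen, YoungDiagram.mem_iff_lt_rowLen]
  omega

lemma Tcol_isLR (lam mu : YoungDiagram) :
    IsLRFilling (lam.cells \ mu.cells) (Tcol mu) := by
  set γ := lam.cells \ mu.cells with hγ
  have hmem : ∀ c : ℕ × ℕ, c ∈ γ ↔ mu.colLen c.2 ≤ c.1 ∧ c.1 < lam.colLen c.2 := by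
    intro ⟨i, j⟩; exact mem_skew_col
  refine ⟨?_, ?_, ?_, ?_⟩
  · intro c hc
    have := (hmem c).mp hc
    simp only [Tcol]
    omega
  · intro c hc c' hc' h1 h2
    have m1 := (hmem c).mp hc
    have m2 := (hmem c').mp hc'
    have hanti : mu.colLen c'.2 ≤ mu.colLen c.2 := mu.colLen_anti _ _ h2
    simp only [Tcol]
    omega
  · intro c hc c' hc' h1 h2
    have m1 := (hmem c).mp hc
    have m2 := (hmem c').mp hc'
    simp only [Tcol]
    rw [h1]
    omega
  · intro c hc h2
    have m1 := (hmem c).mp hc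
    set v := Tcol mu c with hv
    have hveq : c.1 + 1 - mu.colLen c.2 = v := rfl
    -- the extra cell
    set x : ℕ × ℕ := (c.1 - 1, c.2) with hx
    have hxmem : x ∈ γ := by
      rw [hmem]
      simp only [hx, Tcol] at *
      omega
    have hxval : Tcol mu x = v - 1 := by
      simp only [hx, Tcol] at *
      omega
    have hxearl : x.1 < c.1 ∨ (x.1 = c.1 ∧ c.2 < x.2) := by
      left
      simp only [hx, Tcol] at *
      omega
    -- the injection
    set f : ℕ × ℕ → ℕ × ℕ := fun c' => (c'.1 - 1, c'.2) with hf
    have himg : ∀ c' ∈ γ.filter fun c' => (c'.1 < c.1 ∨ (c'.1 = c.1 ∧ c.2 < c'.2)) ∧ Tcol mu c' = v,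
        f c' ∈ γ.filter fun c' => (c'.1 < c.1 ∨ (c'.1 = c.1 ∧ c.2 < c'.2)) ∧ Tcol mu c' = v - 1 := by
      intro c' hc'
      rw [Finset.mem_filter] at hc' ⊢
      obtain ⟨hg, he, hval⟩ := hc'
      have m2 := (hmem c').mp hg
      have hval' : c'.1 + 1 - mu.colLen c'.2 = v := hval
      refine ⟨?_, ?_, ?_⟩
      · rw [hmem]
        simp only [hf]
        omega
      · simp only [hf]
        left
        omega
      · simp only [hf, Tcol]
        omega
    have hxnot : x ∉ (γ.filter fun c' => (c'.1 < c.1 ∨ (c'.1 = c.1 ∧ c.2 < c'.2)) ∧ Tcol mu c' = v).image f := by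
      rw [Finset.mem_image]
      rintro ⟨c', hc', heq⟩
      rw [Finset.mem_filter] at hc'
      obtain ⟨hg, he, hval⟩ := hc'
      have m2 := (hmem c').mp hg
      have hval' : c'.1 + 1 - mu.colLen c'.2 = v := hval
      have h1 : (f c').2 = x.2 := congrArg Prod.snd heq
      have h0 : (f c').1 = x.1 := congrArg Prod.fst heq
      simp only [hf, hx] at h1 h0
      rw [h1] at m2 hval'
      rcases he with h | ⟨h, h'⟩
      · omega
      · omega
    have hsub : insert x ((γ.filter fun c' => (c'.1 < c.1 ∨ (c'.1 = c.1 ∧ c.2 < c'.2)) ∧ Tcol mu c' = v).image f)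
        ⊆ γ.filter fun c' => (c'.1 < c.1 ∨ (c'.1 = c.1 ∧ c.2 < c'.2)) ∧ Tcol mu c' = v - 1 := by
      intro y hy
      rw [Finset.mem_insert] at hy
      rcases hy with rfl | hy
      · rw [Finset.mem_filter]
        exact ⟨hxmem, hxearl, hxval⟩
      · obtain ⟨c', hc', rfl⟩ := Finset.mem_image.mp hy
        exact himg c' hc'
    have hinj : Set.InjOn f (γ.filter fun c' => (c'.1 < c.1 ∨ (c'.1 = c.1 ∧ c.2 < c'.2)) ∧ Tcol mu c' = v) := by
      intro c₁ h₁ c₂ h₂ heq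
      simp only [Finset.mem_coe, Finset.mem_filter] at h₁ h₂
      have m₁ := (hmem c₁).mp h₁.1
      have m₂ := (hmem c₂).mp h₂.1
      have e₁ : c₁.1 + 1 - mu.colLen c₁.2 = v := h₁.2.2
      have e₂ : c₂.1 + 1 - mu.colLen c₂.2 = v := h₂.2.2
      have h1 : (f c₁).2 = (f c₂).2 := congrArg Prod.snd heq
      have h0 : (f c₁).1 = (f c₂).1 := congrArg Prod.fst heq
      simp only [hf] at h1 h0
      rw [h1] at m₁ e₁
      have : c₁.1 = c₂.1 := by omega
      exact Prod.ext this h1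
    have hcard := Finset.card_le_card hsub
    rw [Finset.card_insert_of_notMem hxnot, Finset.card_image_of_injOn hinj] at hcard
    omega

lemma Tcol_content (lam mu : YoungDiagram) (v : ℕ) :
    ((lam.cells \ mu.cells).filter fun c => Tcol mu c = v + 1).card
      = ((Finset.range (lam.rowLen 0)).filter fun j => (v + 1) + mu.colLen j ≤ lam.colLen j).card := by
  apply Finset.card_bij' (fun c _ => c.2) (fun j _ => (mu.colLen j + v, j))
  · intro c hc
    rw [Finset.mem_filter] at hc
    obtain ⟨hg, hval⟩ := hc
    obtain ⟨i, j⟩ := c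
    have m := mem_skew_col.mp hg
    simp only at m ⊢
    have hval' : i + 1 - mu.colLen j = v + 1 := hval
    rw [Finset.mem_filter, Finset.mem_range]
    constructor
    · -- j < lam.rowLen 0
      have : (i, j) ∈ lam := YoungDiagram.mem_iff_lt_colLen.mpr m.2
      have : j < lam.rowLen i := YoungDiagram.mem_iff_lt_rowLen.mp this
      have := lam.rowLen_anti 0 i (Nat.zero_le _)
      omega
    · omega
  · intro j hj
    rw [Finset.mem_filter, Finset.mem_range] at hj
    rw [Finset.mem_filter]
    constructor
    · rw [mem_skew_col]
      omega
    · show mu.colLen j + v + 1 - mu.colLen j = v + 1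
      omega
  · intro c hc
    rw [Finset.mem_filter] at hc
    obtain ⟨hg, hval⟩ := hc
    obtain ⟨i, j⟩ := c
    have m := mem_skew_col.mp hg
    have hval' : i + 1 - mu.colLen j = v + 1 := hval
    simp only [Prod.mk.injEq]
    refine ⟨?_, trivial⟩
    show mu.colLen j + v = i
    omega
  · intro j hj
    rfl


/-- Skew row length. -/
def rowR (lam mu : YoungDiagram) (i : ℕ) : ℕ := lam.rowLen i - mu.rowLen i

/-- `rho lam mu v i` = the `v`-th largest value among `rowR 0, ..., rowR (i-1)`
(with `rho lam mu 0 i` a large dummy value). -/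
def rho (lam mu : YoungDiagram) : ℕ → ℕ → ℕ
  | 0, _ => lam.rowLen 0
  | _+1, 0 => 0
  | v+1, i+1 => max (min (rowR lam mu i) (rho lam mu v i)) (rho lam mu (v+1) i)

/-- The row filling. -/
def Trow (lam mu : YoungDiagram) : ℕ × ℕ → ℕ :=
  fun c => 1 + ((Finset.range c.1).filter fun k => lam.rowLen c.1 - c.2 ≤ rowR lam mu k).card

variable {lam mu : YoungDiagram}

lemma rowR_le (i : ℕ) : rowR lam mu i ≤ lam.rowLen 0 :=
  le_trans (Nat.sub_le _ _) (lam.rowLen_anti 0 i (Nat.zero_le _))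

lemma rho_anti_v : ∀ i v : ℕ, rho lam mu (v+1) i ≤ rho lam mu v i := by
  intro i
  induction i with
  | zero => intro v; simp [rho]
  | succ i IH =>
    intro v
    match v with
    | 0 =>
      simp only [rho]
      refine max_le (le_trans (min_le_right _ _) ?_) (le_trans (IH 0) ?_) <;> simp [rho]
    | v+1 =>
      simp only [rho]
      exact max_le (le_max_of_le_left (min_le_min le_rfl (IH v)))
        (le_max_of_le_right (IH (v+1)))

lemma rho_char : ∀ i v g : ℕ, 1 ≤ g →
    (g ≤ rho lam mu (v+1) i ↔
      v + 1 ≤ ((Finset.range i).filter fun k => g ≤ rowR lam mu k).card) := by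
  intro i
  induction i with
  | zero =>
    intro v g hg
    simp [rho]
    omega
  | succ i IH =>
    intro v g hg
    have hsplit : ((Finset.range (i+1)).filter fun k => g ≤ rowR lam mu k).card
        = ((Finset.range i).filter fun k => g ≤ rowR lam mu k).card
          + (if g ≤ rowR lam mu i then 1 else 0) := by
      rw [Finset.range_add_one, Finset.filter_insert]
      split_ifs with h
      · rw [Finset.card_insert_of_notMem]
        intro hmem
        exact absurd (Finset.mem_range.mp (Finset.mem_of_mem_filter _ hmem)) (lt_irrefl i)
      · omega
    rw [hsplit]
    match v with
    | 0 =>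
      have h0 : rho lam mu 1 (i+1) = max (min (rowR lam mu i) (lam.rowLen 0)) (rho lam mu 1 i) := by
        simp [rho]
      rw [h0, le_max_iff, le_min_iff, IH 0 g hg]
      have hr : rowR lam mu i ≤ lam.rowLen 0 := rowR_le i
      split_ifs with h
      · constructor
        · intro _; omega
        · intro _; left; exact ⟨h, le_trans h hr⟩
      · constructor
        · rintro (⟨h1, _⟩ | h1)
          · exact absurd h1 h
          · omega
        · intro h1; right; omega
    | v+1 =>
      have h0 : rho lam mu (v+2) (i+1)
          = max (min (rowR lam mu i) (rho lam mu (v+1) i)) (rho lam mu (v+2) i) := by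
        simp [rho]
      rw [h0, le_max_iff, le_min_iff, IH v g hg, IH (v+1) g hg]
      split_ifs with h
      · constructor
        · rintro (⟨_, h1⟩ | h1) <;> omega
        · intro h1
          left
          exact ⟨h, by omega⟩
      · constructor
        · rintro (⟨h1, _⟩ | h1)
          · exact absurd h1 h
          · omega
        · intro h1; right; omega

lemma rho_rec (i v : ℕ) : rho lam mu (v+1) (i+1)
    = rho lam mu (v+1) i
      + (min (rowR lam mu i) (rho lam mu v i) - min (rowR lam mu i) (rho lam mu (v+1) i)) := by
  have h := rho_anti_v (lam := lam) (mu := mu) i v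
  have h0 : rho lam mu (v+1) (i+1)
      = max (min (rowR lam mu i) (rho lam mu v i)) (rho lam mu (v+1) i) := by
    match v with
    | 0 => simp [rho]
    | v+1 => simp [rho]
  rw [h0]
  omega

lemma rho_step_le (i v : ℕ) : rho lam mu (v+2) (i+1) ≤ rho lam mu (v+1) i := by
  have h0 : rho lam mu (v+2) (i+1)
      = max (min (rowR lam mu i) (rho lam mu (v+1) i)) (rho lam mu (v+2) i) := by
    simp [rho]
  rw [h0]
  exact max_le (min_le_right _ _) (rho_anti_v i (v+1))

lemma rowLen_mono (h : mu ≤ lam) (i : ℕ) : mu.rowLen i ≤ lam.rowLen i := by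
  rcases Nat.eq_zero_or_pos (mu.rowLen i) with h0 | h0
  · omega
  · have hmem : (i, mu.rowLen i - 1) ∈ mu := YoungDiagram.mem_iff_lt_rowLen.mpr (by omega)
    have hmem' : (i, mu.rowLen i - 1) ∈ lam := by
      have := YoungDiagram.cells_subset_iff.mpr h
      exact (YoungDiagram.mem_cells _).mp (this ((YoungDiagram.mem_cells _).mpr hmem))
    have := YoungDiagram.mem_iff_lt_rowLen.mp hmem'
    omega

lemma row_cnt (hmu : mu ≤ lam) (i v : ℕ) :
    ((lam.cells \ mu.cells).filter fun c => c.1 = i ∧ Trow lam mu c = v + 1).card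
      = min (rowR lam mu i) (rho lam mu v i) - min (rowR lam mu i) (rho lam mu (v+1) i) := by
  have hrl := rowLen_mono hmu i
  have key : ((lam.cells \ mu.cells).filter fun c => c.1 = i ∧ Trow lam mu c = v + 1).card
      = (Finset.Ioc (min (rowR lam mu i) (rho lam mu (v+1) i))
          (min (rowR lam mu i) (rho lam mu v i))).card := by
    apply Finset.card_bij' (fun c _ => lam.rowLen i - c.2)
      (fun g _ => (i, lam.rowLen i - g))
    · -- forward membership
      intro c hc
      rw [Finset.mem_filter] at hc
      obtain ⟨hcγ, hci, hval⟩ := hc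
      obtain ⟨i', j⟩ := c
      simp only at hci
      subst hci
      have hm := mem_skew_row.mp hcγ
      set g := lam.rowLen i' - j with hgdef
      have hg1 : 1 ≤ g := by omega
      have hrl' : mu.rowLen i' ≤ lam.rowLen i' := rowLen_mono hmu i'
      have hgr : g ≤ rowR lam mu i' := by
        have : rowR lam mu i' = lam.rowLen i' - mu.rowLen i' := rfl
        omega
      have hcnt : ((Finset.range i').filter fun k => g ≤ rowR lam mu k).card = v := by
        have : Trow lam mu (i', j) = 1 + ((Finset.range i').filter fun k => g ≤ rowR lam mu k).card := rfl
        omega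
      rw [Finset.mem_Ioc]
      constructor
      · -- min (r) (rho (v+1)) < g
        have hch : ¬ (g ≤ rho lam mu (v+1) i') := by
          rw [rho_char i' v g hg1]
          omega
        have h2 : rho lam mu (v+1) i' < g := by omega
        exact lt_of_le_of_lt (min_le_right _ _) h2
      · -- g ≤ min r (rho v)
        rcases v with _ | w
        · refine le_min hgr ?_
          have hz : rho lam mu 0 i' = lam.rowLen 0 := by simp [rho]
          rw [hz]
          have := lam.rowLen_anti 0 i' (Nat.zero_le _)
          omega
        · refine le_min hgr ?_
          rw [rho_char i' w g hg1]
          omega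
    · -- backward membership
      intro g hg
      rw [Finset.mem_Ioc] at hg
      have hg1 : 1 ≤ g := by
        have := hg.1
        omega
      have hgr : g ≤ rowR lam mu i := le_trans hg.2 (min_le_left _ _)
      have hgrho : g ≤ rho lam mu v i := le_trans hg.2 (min_le_right _ _)
      have hnrho : ¬ (g ≤ rho lam mu (v+1) i) := by
        intro hcon
        have : g ≤ min (rowR lam mu i) (rho lam mu (v+1) i) := le_min hgr hcon
        omega
      rw [Finset.mem_filter]
      have hrR : rowR lam mu i = lam.rowLen i - mu.rowLen i := rfl
      refine ⟨?_, rfl, ?_⟩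
      · rw [mem_skew_row]
        omega
      · show 1 + ((Finset.range i).filter fun k =>
            lam.rowLen i - (lam.rowLen i - g) ≤ rowR lam mu k).card = v + 1
        have heq : lam.rowLen i - (lam.rowLen i - g) = g := by omega
        rw [heq]
        have hcle : ((Finset.range i).filter fun k => g ≤ rowR lam mu k).card ≤ v := by
          by_contra hcon
          push_neg at hcon
          exact hnrho ((rho_char i v g hg1).mpr hcon)
        have hcge : v ≤ ((Finset.range i).filter fun k => g ≤ rowR lam mu k).card := by
          rcases v with _ | w
          · omega
          · rw [← rho_char i w g hg1]
            exact hgrho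
        omega
    · -- left inverse
      intro c hc
      rw [Finset.mem_filter] at hc
      obtain ⟨hcγ, hci, hval⟩ := hc
      obtain ⟨i', j⟩ := c
      simp only at hci
      subst hci
      have hm := mem_skew_row.mp hcγ
      have h2 : lam.rowLen i' - (lam.rowLen i' - j) = j := by omega
      simp only [Prod.mk.injEq, h2]
    · -- right inverse
      intro g hg
      rw [Finset.mem_Ioc] at hg
      have hgr : g ≤ rowR lam mu i := le_trans hg.2 (min_le_left _ _)
      have hrR : rowR lam mu i = lam.rowLen i - mu.rowLen i := rfl
      show lam.rowLen i - (lam.rowLen i - g) = g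
      omega
  rw [key, Nat.card_Ioc]


lemma prefix_cnt (hmu : mu ≤ lam) (v m : ℕ) :
    ((lam.cells \ mu.cells).filter fun c => c.1 < m ∧ Trow lam mu c = v + 1).card
      = rho lam mu (v+1) m := by
  induction m with
  | zero =>
    have h0 : rho lam mu (v+1) 0 = 0 := by simp [rho]
    rw [h0]
    rw [Finset.filter_false_of_mem]
    · simp
    · intro c _
      simp only [not_and]
      intro h
      omega
  | succ m IH =>
    have hsplit : ((lam.cells \ mu.cells).filter fun c => c.1 < m + 1 ∧ Trow lam mu c = v + 1)
        = ((lam.cells \ mu.cells).filter fun c => c.1 < m ∧ Trow lam mu c = v + 1)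
          ∪ ((lam.cells \ mu.cells).filter fun c => c.1 = m ∧ Trow lam mu c = v + 1) := by
      ext c
      simp only [Finset.mem_filter, Finset.mem_union]
      constructor
      · rintro ⟨h1, h2, h3⟩
        rcases Nat.lt_or_ge c.1 m with h | h
        · exact Or.inl ⟨h1, h, h3⟩
        · exact Or.inr ⟨h1, by omega, h3⟩
      · rintro (⟨h1, h2, h3⟩ | ⟨h1, h2, h3⟩)
        · exact ⟨h1, by omega, h3⟩
        · exact ⟨h1, by omega, h3⟩
    have hdisj : Disjoint
        ((lam.cells \ mu.cells).filter fun c => c.1 < m ∧ Trow lam mu c = v + 1)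
        ((lam.cells \ mu.cells).filter fun c => c.1 = m ∧ Trow lam mu c = v + 1) := by
      rw [Finset.disjoint_left]
      intro c h1 h2
      rw [Finset.mem_filter] at h1 h2
      omega
    rw [hsplit, Finset.card_union_of_disjoint hdisj, IH, row_cnt hmu m v, rho_rec]

lemma Trow_content (hmu : mu ≤ lam) (v : ℕ) :
    ((lam.cells \ mu.cells).filter fun c => Trow lam mu c = v + 1).card
      = rho lam mu (v+1) (lam.colLen 0) := by
  rw [← prefix_cnt hmu v (lam.colLen 0)]
  congr 1
  apply Finset.filter_congr
  intro c hc
  have h1 : c ∈ lam := (YoungDiagram.mem_cells _).mp (Finset.mem_sdiff.mp hc).1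
  have h2 : (c.1, (0:ℕ)) ∈ lam := lam.up_left_mem le_rfl (Nat.zero_le _) h1
  have h3 : c.1 < lam.colLen 0 := YoungDiagram.mem_iff_lt_colLen.mp h2
  simp [h3]

lemma Trow_isLR (hmu : mu ≤ lam) :
    IsLRFilling (lam.cells \ mu.cells) (Trow lam mu) := by
  set γ := lam.cells \ mu.cells with hγ
  refine ⟨?_, ?_, ?_, ?_⟩
  · intro c hc
    simp [Trow]
  · -- weakly increasing rows
    intro c hc c' hc' h1 h2
    simp only [Trow]
    rw [h1]
    have hsub : ((Finset.range c'.1).filter fun k => lam.rowLen c'.1 - c.2 ≤ rowR lam mu k) ⊆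
        ((Finset.range c'.1).filter fun k => lam.rowLen c'.1 - c'.2 ≤ rowR lam mu k) := by
      intro k hk
      rw [Finset.mem_filter] at hk ⊢
      exact ⟨hk.1, by omega⟩
    have := Finset.card_le_card hsub
    omega
  · -- strictly increasing columns
    intro c hc c' hc' h2 h1
    have hm : mu.rowLen c.1 ≤ c.2 ∧ c.2 < lam.rowLen c.1 := mem_skew_row.mp hc
    have hm' : mu.rowLen c'.1 ≤ c'.2 ∧ c'.2 < lam.rowLen c'.1 := mem_skew_row.mp hc'
    simp only [Trow]
    rw [← h2]
    set S1 := (Finset.range c.1).filter fun k => lam.rowLen c.1 - c.2 ≤ rowR lam mu k with hS1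
    set S2 := (Finset.range c'.1).filter fun k => lam.rowLen c'.1 - c.2 ≤ rowR lam mu k with hS2
    have hsub : S1 ∪ Finset.Ico c.1 c'.1 ⊆ S2 := by
      intro k hk
      rw [Finset.mem_union] at hk
      rcases hk with hk | hk
      · rw [hS1, Finset.mem_filter, Finset.mem_range] at hk
        rw [hS2, Finset.mem_filter, Finset.mem_range]
        have hanti : lam.rowLen c'.1 ≤ lam.rowLen c.1 := lam.rowLen_anti _ _ (le_of_lt h1)
        exact ⟨by omega, by omega⟩
      · rw [Finset.mem_Ico] at hk
        rw [hS2, Finset.mem_filter, Finset.mem_range]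
        refine ⟨hk.2, ?_⟩
        have hmu_k : mu.rowLen k ≤ mu.rowLen c.1 := mu.rowLen_anti _ _ hk.1
        have hlam_k : lam.rowLen c'.1 ≤ lam.rowLen k := lam.rowLen_anti _ _ (le_of_lt hk.2)
        have hrk : rowR lam mu k = lam.rowLen k - mu.rowLen k := rfl
        omega
    have hdisj : Disjoint S1 (Finset.Ico c.1 c'.1) := by
      rw [Finset.disjoint_left]
      intro k h1' h2'
      rw [hS1, Finset.mem_filter, Finset.mem_range] at h1'
      rw [Finset.mem_Ico] at h2'
      omega
    have hcard := Finset.card_le_card hsub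
    rw [Finset.card_union_of_disjoint hdisj, Nat.card_Ico] at hcard
    omega
  · -- lattice condition
    intro c hc h2
    have hm : mu.rowLen c.1 ≤ c.2 ∧ c.2 < lam.rowLen c.1 := mem_skew_row.mp hc
    set v := Trow lam mu c with hv
    obtain ⟨u, hu⟩ : ∃ u, v = u + 2 := ⟨v - 2, by omega⟩
    have ha : (γ.filter fun c' => c'.1 < c.1 ∧ Trow lam mu c' = u + 1).card
        = rho lam mu (u+1) c.1 := prefix_cnt hmu u c.1
    have hsub1 : (γ.filter fun c' => c'.1 < c.1 ∧ Trow lam mu c' = u + 1) ⊆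
        (γ.filter fun c' => (c'.1 < c.1 ∨ (c'.1 = c.1 ∧ c.2 < c'.2)) ∧ Trow lam mu c' = v - 1) := by
      intro x hx
      rw [Finset.mem_filter] at hx ⊢
      exact ⟨hx.1, Or.inl hx.2.1, by omega⟩
    have hb : (γ.filter fun c' => (c'.1 < c.1 ∨ (c'.1 = c.1 ∧ c.2 < c'.2)) ∧ Trow lam mu c' = v) ⊆
        (γ.filter fun c' => c'.1 < c.1 ∧ Trow lam mu c' = (u+1) + 1)
          ∪ ((γ.filter fun c' => c'.1 = c.1 ∧ Trow lam mu c' = (u+1)+1).erase c) := by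
      intro x hx
      rw [Finset.mem_filter] at hx
      obtain ⟨hxγ, hearl, hval⟩ := hx
      rw [Finset.mem_union]
      rcases hearl with h | ⟨hh1, hh2⟩
      · left
        rw [Finset.mem_filter]
        exact ⟨hxγ, h, by omega⟩
      · right
        rw [Finset.mem_erase]
        constructor
        · intro heq
          rw [heq] at hh2
          omega
        · rw [Finset.mem_filter]
          exact ⟨hxγ, hh1, by omega⟩
    have hc2 : c ∈ γ.filter fun c' => c'.1 = c.1 ∧ Trow lam mu c' = (u+1) + 1 := by
      rw [Finset.mem_filter]
      exact ⟨hc, rfl, by omega⟩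
    have hc1 : (γ.filter fun c' => c'.1 < c.1 ∧ Trow lam mu c' = (u+1) + 1).card
        = rho lam mu (u+2) c.1 := prefix_cnt hmu (u+1) c.1
    have hrowc : (γ.filter fun c' => c'.1 = c.1 ∧ Trow lam mu c' = (u+1) + 1).card
        = min (rowR lam mu c.1) (rho lam mu (u+1) c.1)
          - min (rowR lam mu c.1) (rho lam mu (u+2) c.1) := row_cnt hmu c.1 (u+1)
    have hQ1 : 1 ≤ (γ.filter fun c' => c'.1 = c.1 ∧ Trow lam mu c' = (u+1) + 1).card :=
      Finset.card_pos.mpr ⟨c, hc2⟩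
    have hrec : rho lam mu (u+2) (c.1 + 1) = rho lam mu (u+2) c.1
        + (min (rowR lam mu c.1) (rho lam mu (u+1) c.1)
            - min (rowR lam mu c.1) (rho lam mu (u+2) c.1)) := rho_rec c.1 (u+1)
    have hstep : rho lam mu (u+2) (c.1+1) ≤ rho lam mu (u+1) c.1 := rho_step_le c.1 u
    have hbc := Finset.card_le_card hb
    have hub := Finset.card_union_le
      (γ.filter fun c' => c'.1 < c.1 ∧ Trow lam mu c' = (u+1) + 1)
      ((γ.filter fun c' => c'.1 = c.1 ∧ Trow lam mu c' = (u+1)+1).erase c)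
    have herase := Finset.card_erase_of_mem hc2
    have hac := Finset.card_le_card hsub1
    omega


lemma rho_anti_v_le {v w : ℕ} (h : v ≤ w) (i : ℕ) :
    rho lam mu (w+1) i ≤ rho lam mu (v+1) i := by
  induction w with
  | zero =>
    have hv : v = 0 := by omega
    subst hv; exact le_rfl
  | succ w IH =>
    rcases Nat.eq_or_lt_of_le h with h1 | h1
    · subst h1; exact le_rfl
    · exact le_trans (rho_anti_v i (w+1)) (IH (by omega))

lemma main_shape (lam mu : YoungDiagram) (hsub : mu < lam)
    (H : ∀ v : ℕ,
      ((Finset.range (lam.rowLen 0)).filter fun j => (v + 1) + mu.colLen j ≤ lam.colLen j).card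
        = rho lam mu (v+1) (lam.colLen 0)) :
    ∃ ν : YoungDiagram, ν.card = lam.card - mu.card ∧
      (IsTranslateOf (lam.cells \ mu.cells) ν.cells
        ∨ IsRotTranslateOf (lam.cells \ mu.cells) ν.cells) := by
  have hmu : mu ≤ lam := le_of_lt hsub
  set n := lam.colLen 0 with hn
  set W := lam.rowLen 0 with hW
  have hrowmono : ∀ i, mu.rowLen i ≤ lam.rowLen i := rowLen_mono hmu
  have hf0 : ∀ i, 1 ≤ rowR lam mu i → i < n := by
    intro i h
    have h1 : 1 ≤ lam.rowLen i := by
      have : rowR lam mu i = lam.rowLen i - mu.rowLen i := rfl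
      omega
    have h2 : (i, 0) ∈ lam := YoungDiagram.mem_iff_lt_rowLen.mpr (by omega)
    exact YoungDiagram.mem_iff_lt_colLen.mp h2
  set S := (Finset.range n).filter (fun i => 1 ≤ rowR lam mu i) with hS
  set N := S.card with hN
  obtain ⟨c0, hc0l, hc0m⟩ := Finset.exists_of_ssubset (YoungDiagram.cells_ssubset_iff.mpr hsub)
  have hc0 : c0 ∈ lam.cells \ mu.cells := Finset.mem_sdiff.mpr ⟨hc0l, hc0m⟩
  have hc0' : mu.rowLen c0.1 ≤ c0.2 ∧ c0.2 < lam.rowLen c0.1 := mem_skew_row.mp hc0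
  have hNpos : 1 ≤ N := by
    refine Finset.card_pos.mpr ⟨c0.1, ?_⟩
    rw [hS, Finset.mem_filter, Finset.mem_range]
    have h1 : 1 ≤ rowR lam mu c0.1 := by
      have : rowR lam mu c0.1 = lam.rowLen c0.1 - mu.rowLen c0.1 := rfl
      have := hrowmono c0.1
      omega
    exact ⟨hf0 _ h1, h1⟩
  obtain ⟨N', hN'⟩ : ∃ N', N = N' + 1 := ⟨N - 1, by omega⟩
  have hchar : ∀ v g : ℕ, 1 ≤ g →
      (g ≤ rho lam mu (v+1) n ↔
        v + 1 ≤ ((Finset.range n).filter fun k => g ≤ rowR lam mu k).card) :=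
    fun v g hg => rho_char n v g hg
  have hSeq1 : ((Finset.range n).filter fun k => 1 ≤ rowR lam mu k) = S := hS.symm
  -- Step A : R has exactly N parts
  have hRN : 1 ≤ rho lam mu (N'+1) n := by
    rw [hchar N' 1 le_rfl, hSeq1, ← hN, hN']
  have hRN1 : rho lam mu (N'+1+1) n = 0 := by
    by_contra hcon
    have h1 : 1 ≤ rho lam mu (N'+1+1) n := by omega
    rw [hchar (N'+1) 1 le_rfl, hSeq1, ← hN, hN'] at h1
    omega
  -- Step B : a column of height N exists, all column heights ≤ N
  have hMN : 1 ≤ ((Finset.range W).filter fun j => (N' + 1) + mu.colLen j ≤ lam.colLen j).card := by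
    rw [H N']; exact hRN
  obtain ⟨jN, hjN⟩ := Finset.card_pos.mp hMN
  rw [Finset.mem_filter, Finset.mem_range] at hjN
  set t := mu.colLen jN with ht
  have hjNb : N' + 1 + t ≤ lam.colLen jN := hjN.2
  have hColBound : ∀ j, lam.colLen j ≤ (N' + 1) + mu.colLen j := by
    intro j
    by_contra hcon
    push_neg at hcon
    have hjW : j < W := by
      have h1 : 0 < lam.colLen j := by omega
      have h2 : (0, j) ∈ lam := YoungDiagram.mem_iff_lt_colLen.mpr h1
      exact YoungDiagram.mem_iff_lt_rowLen.mp h2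
    have h1 : 1 ≤ ((Finset.range W).filter fun j' => (N' + 1 + 1) + mu.colLen j' ≤ lam.colLen j').card := by
      refine Finset.card_pos.mpr ⟨j, ?_⟩
      rw [Finset.mem_filter, Finset.mem_range]
      exact ⟨hjW, by omega⟩
    rw [H (N'+1)] at h1
    omega
  have hcoljN : lam.colLen jN = t + (N' + 1) := by
    have := hColBound jN
    omega
  -- Step C : the nonempty rows are exactly [t, t+N)
  have hsub1 : Finset.Ico t (t + (N'+1)) ⊆ S := by
    intro i hi
    rw [Finset.mem_Ico] at hi
    have hcell : (i, jN) ∈ lam.cells \ mu.cells := by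
      rw [mem_skew_col]
      omega
    have hrow := mem_skew_row.mp hcell
    have h1 : 1 ≤ rowR lam mu i := by
      have : rowR lam mu i = lam.rowLen i - mu.rowLen i := rfl
      omega
    rw [hS, Finset.mem_filter, Finset.mem_range]
    exact ⟨hf0 _ h1, h1⟩
  have hSeq : S = Finset.Ico t (t + (N'+1)) := by
    symm
    apply Finset.eq_of_subset_of_card_le hsub1
    rw [Nat.card_Ico]
    omega
  have hrow_iff : ∀ i, 1 ≤ rowR lam mu i ↔ (t ≤ i ∧ i < t + (N'+1)) := by
    intro i
    constructor
    · intro h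
      have hmem : i ∈ S := by
        rw [hS, Finset.mem_filter, Finset.mem_range]; exact ⟨hf0 _ h, h⟩
      rw [hSeq, Finset.mem_Ico] at hmem
      exact hmem
    · intro h
      have hmem : i ∈ S := hsub1 (Finset.mem_Ico.mpr h)
      rw [hS, Finset.mem_filter] at hmem
      exact hmem.2
  have hcell_jN : ∀ i, t ≤ i → i < t + (N'+1) → mu.rowLen i ≤ jN ∧ jN < lam.rowLen i := by
    intro i h1 h2
    exact mem_skew_row.mp (by rw [mem_skew_col]; omega)
  set ie := t + N' with hie
  -- Step D : number of columns = longest row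
  have hM0 : ((Finset.range W).filter fun j => (0 + 1) + mu.colLen j ≤ lam.colLen j)
      = Finset.Ico (mu.rowLen ie) (lam.rowLen t) := by
    ext j
    rw [Finset.mem_filter, Finset.mem_range, Finset.mem_Ico]
    constructor
    · rintro ⟨hjW, hj⟩
      set i := mu.colLen j with hi
      have hcell : (i, j) ∈ lam.cells \ mu.cells := by rw [mem_skew_col]; omega
      have hrow := mem_skew_row.mp hcell
      have h1 : 1 ≤ rowR lam mu i := by
        have : rowR lam mu i = lam.rowLen i - mu.rowLen i := rfl
        omega
      have hIco := (hrow_iff i).mp h1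
      have e1 : mu.rowLen ie ≤ mu.rowLen i := mu.rowLen_anti _ _ (by omega)
      have e2 : lam.rowLen i ≤ lam.rowLen t := lam.rowLen_anti _ _ (by omega)
      omega
    · rintro ⟨hj1, hj2⟩
      rcases le_or_gt jN j with hcase | hcase
      · have hcell : (t, j) ∈ lam.cells \ mu.cells := by
          rw [mem_skew_row]
          have := (hcell_jN t (by omega) (by omega)).1
          omega
        have hcc := mem_skew_col.mp hcell
        have h2 : lam.rowLen t ≤ W := by rw [hW]; exact lam.rowLen_anti 0 t (Nat.zero_le _)
        exact ⟨by omega, by omega⟩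
      · have hcell : (ie, j) ∈ lam.cells \ mu.cells := by
          rw [mem_skew_row]
          have := (hcell_jN ie (by omega) (by omega)).2
          omega
        have hcc := mem_skew_col.mp hcell
        have hrr := mem_skew_row.mp hcell
        have h2 : lam.rowLen ie ≤ W := by rw [hW]; exact lam.rowLen_anti 0 ie (Nat.zero_le _)
        exact ⟨by omega, by omega⟩
  have hM0card : ((Finset.range W).filter fun j => (0 + 1) + mu.colLen j ≤ lam.colLen j).card
      = lam.rowLen t - mu.rowLen ie := by rw [hM0, Nat.card_Ico]
  have hub : ∀ i, rowR lam mu i ≤ rho lam mu 1 n := by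
    intro i
    rcases Nat.eq_zero_or_pos (rowR lam mu i) with h | h
    · omega
    · rw [hchar 0 _ h]
      refine Finset.card_pos.mpr ⟨i, ?_⟩
      rw [Finset.mem_filter, Finset.mem_range]
      exact ⟨hf0 _ h, le_rfl⟩
  have hR0pos : 1 ≤ rho lam mu 1 n := le_trans hRN (rho_anti_v_le (Nat.zero_le N') n)
  have histar0 : 0 < ((Finset.range n).filter fun k => rho lam mu 1 n ≤ rowR lam mu k).card := by
    have := (hchar 0 _ hR0pos).mp le_rfl
    omega
  obtain ⟨istar, histar⟩ := Finset.card_pos.mp histar0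
  rw [Finset.mem_filter, Finset.mem_range] at histar
  have histar2 : rowR lam mu istar = rho lam mu 1 n := le_antisymm (hub istar) histar.2
  have histarI : t ≤ istar ∧ istar < t + (N'+1) := (hrow_iff istar).mp (by omega)
  have hD : lam.rowLen istar = lam.rowLen t ∧ mu.rowLen istar = mu.rowLen ie := by
    have h0 := H 0
    rw [hM0card] at h0
    have h1 : lam.rowLen t - mu.rowLen ie = rho lam mu 1 n := h0
    have e1 : lam.rowLen istar ≤ lam.rowLen t := lam.rowLen_anti _ _ histarI.1
    have e2 : mu.rowLen ie ≤ mu.rowLen istar := mu.rowLen_anti _ _ (by omega)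
    have e3 : rowR lam mu istar = lam.rowLen istar - mu.rowLen istar := rfl
    have e4 := hrowmono istar
    omega
  -- Step E : number of height-N columns = shortest row
  have hMN0 : ((Finset.range W).filter fun j => (N' + 1) + mu.colLen j ≤ lam.colLen j)
      = Finset.Ico (mu.rowLen t) (lam.rowLen ie) := by
    ext j
    rw [Finset.mem_filter, Finset.mem_range, Finset.mem_Ico]
    constructor
    · rintro ⟨hjW, hj⟩
      set tj := mu.colLen j with htj
      have hcells : ∀ i, tj ≤ i → i < tj + (N'+1) → (i, j) ∈ lam.cells \ mu.cells := by
        intro i h1 h2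
        rw [mem_skew_col]
        omega
      have h1 : 1 ≤ rowR lam mu tj := by
        have hrow := mem_skew_row.mp (hcells tj le_rfl (by omega))
        have : rowR lam mu tj = lam.rowLen tj - mu.rowLen tj := rfl
        omega
      have h2 : 1 ≤ rowR lam mu (tj + N') := by
        have hrow := mem_skew_row.mp (hcells (tj + N') (by omega) (by omega))
        have : rowR lam mu (tj + N') = lam.rowLen (tj + N') - mu.rowLen (tj + N') := rfl
        omega
      have ha := (hrow_iff tj).mp h1
      have hb := (hrow_iff (tj + N')).mp h2
      have htjt : tj = t := by omega
      have hcell1 := mem_skew_row.mp (hcells t (by omega) (by omega))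
      have hcell2 := mem_skew_row.mp (hcells ie (by omega) (by omega))
      exact ⟨hcell1.1, hcell2.2⟩
    · rintro ⟨hj1, hj2⟩
      have hlam : (ie, j) ∈ lam := YoungDiagram.mem_iff_lt_rowLen.mpr hj2
      have h1 : ie < lam.colLen j := YoungDiagram.mem_iff_lt_colLen.mp hlam
      have hmu1 : ((t : ℕ), j) ∉ mu := by
        rw [YoungDiagram.mem_iff_lt_rowLen]
        omega
      have h2 : mu.colLen j ≤ t := by
        by_contra hcon
        push_neg at hcon
        exact hmu1 (YoungDiagram.mem_iff_lt_colLen.mpr hcon)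
      have h3 : lam.rowLen ie ≤ W := by rw [hW]; exact lam.rowLen_anti 0 ie (Nat.zero_le _)
      exact ⟨by omega, by omega⟩
  have hMNcard : ((Finset.range W).filter fun j => (N' + 1) + mu.colLen j ≤ lam.colLen j).card
      = lam.rowLen ie - mu.rowLen t := by rw [hMN0, Nat.card_Ico]
  have hminrow : ∀ i, t ≤ i → i < t + (N'+1) → rho lam mu (N'+1) n ≤ rowR lam mu i := by
    intro i h1 h2
    have hF := (hchar N' _ hRN).mp le_rfl
    have hFS : ((Finset.range n).filter fun k => rho lam mu (N'+1) n ≤ rowR lam mu k) ⊆ S := by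
      intro k hk
      rw [Finset.mem_filter] at hk
      rw [hS, Finset.mem_filter]
      exact ⟨hk.1, by omega⟩
    have hFeq : ((Finset.range n).filter fun k => rho lam mu (N'+1) n ≤ rowR lam mu k) = S := by
      apply Finset.eq_of_subset_of_card_le hFS
      omega
    have hmem : i ∈ S := hsub1 (Finset.mem_Ico.mpr ⟨h1, h2⟩)
    rw [← hFeq, Finset.mem_filter] at hmem
    exact hmem.2
  have hex2 : ∃ i2, (t ≤ i2 ∧ i2 < t + (N'+1)) ∧ rowR lam mu i2 = rho lam mu (N'+1) n := by
    by_contra hcon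
    push_neg at hcon
    have hsub2 : S ⊆ (Finset.range n).filter fun k => rho lam mu (N'+1) n + 1 ≤ rowR lam mu k := by
      intro k hk
      have hkI : t ≤ k ∧ k < t + (N'+1) := by
        have := hk
        rw [hSeq, Finset.mem_Ico] at this
        exact this
      have h1 := hminrow k hkI.1 hkI.2
      have h2 := hcon k hkI
      rw [hS, Finset.mem_filter] at hk
      rw [Finset.mem_filter]
      exact ⟨hk.1, by omega⟩
    have hcard := Finset.card_le_card hsub2
    have := (hchar N' (rho lam mu (N'+1) n + 1) (by omega)).mpr (by omega)
    omega
  obtain ⟨i2, hi2I, hi2⟩ := hex2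
  have hE : lam.rowLen i2 = lam.rowLen ie ∧ mu.rowLen i2 = mu.rowLen t := by
    have h1 := H N'
    rw [hMNcard] at h1
    have e1 : lam.rowLen ie ≤ lam.rowLen i2 := lam.rowLen_anti _ _ (by omega)
    have e2 : mu.rowLen i2 ≤ mu.rowLen t := mu.rowLen_anti _ _ (by omega)
    have e3 : rowR lam mu i2 = lam.rowLen i2 - mu.rowLen i2 := rfl
    have e4 := hrowmono i2
    have e5 : 1 ≤ rowR lam mu i2 := (hrow_iff i2).mpr hi2I
    omega
  have hcardγ : (lam.cells \ mu.cells).card = lam.card - mu.card :=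
    Finset.card_sdiff_of_subset (YoungDiagram.cells_subset_iff.mpr hmu)
  -- Step F : dichotomy
  rcases le_total i2 istar with hcase | hcase
  · -- lam constant on the rows: rotated shape
    have e4' : lam.rowLen ie ≤ lam.rowLen t := lam.rowLen_anti _ _ (by omega)
    have e3' : lam.rowLen istar ≤ lam.rowLen i2 := lam.rowLen_anti _ _ hcase
    have hlamconst : ∀ i, t ≤ i → i < t + (N'+1) → lam.rowLen i = lam.rowLen t := by
      intro i h1 h2
      rcases le_total i istar with h | h
      · have f1 : lam.rowLen istar ≤ lam.rowLen i := lam.rowLen_anti _ _ h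
        have f2 : lam.rowLen i ≤ lam.rowLen t := lam.rowLen_anti _ _ h1
        omega
      · have f1 : lam.rowLen i ≤ lam.rowLen istar := lam.rowLen_anti _ _ h
        have f2 : lam.rowLen ie ≤ lam.rowLen i := lam.rowLen_anti _ _ (by omega)
        omega
    set C := lam.rowLen t with hC
    have hsorted : ((List.range (N'+1)).map fun k => C - mu.rowLen (t + N' - k)).Pairwise (· ≥ ·) := by
      rw [List.pairwise_map]
      refine List.Pairwise.imp ?_ (List.pairwise_lt_range (n := _))
      intro a b hab
      have := mu.rowLen_anti (t + N' - b) (t + N' - a) (by omega)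
      omega
    set ν := YoungDiagram.ofRowLens _ hsorted.sortedGE with hν
    have hνmem : ∀ k l : ℕ, ((k, l) ∈ ν ↔ k < N'+1 ∧ l < C - mu.rowLen (t + N' - k)) := by
      intro k l
      rw [hν, YoungDiagram.mem_ofRowLens]
      constructor
      · rintro ⟨h1, h2⟩
        rw [List.length_map, List.length_range] at h1
        refine ⟨h1, ?_⟩
        rw [List.getElem_map, List.getElem_range] at h2
        exact h2
      · rintro ⟨h1, h2⟩
        refine ⟨by rw [List.length_map, List.length_range]; exact h1, ?_⟩
        rw [List.getElem_map, List.getElem_range]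
        exact h2
    have hbounds : ∀ c ∈ ν.cells, c.1 ≤ t + N' ∧ c.2 ≤ C - 1 := by
      rintro ⟨k, l⟩ hkl
      rw [YoungDiagram.mem_cells, hνmem] at hkl
      exact ⟨by simp only; omega, by simp only; omega⟩
    have himg : lam.cells \ mu.cells = ν.cells.image fun c => (t + N' - c.1, C - 1 - c.2) := by
      ext c
      obtain ⟨i, j⟩ := c
      rw [mem_skew_row, Finset.mem_image]
      constructor
      · rintro ⟨h1, h2⟩
        have hr1 : 1 ≤ rowR lam mu i := by
          have : rowR lam mu i = lam.rowLen i - mu.rowLen i := rfl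
          omega
        have hI := (hrow_iff i).mp hr1
        have hlr : lam.rowLen i = C := hlamconst i hI.1 hI.2
        refine ⟨(t + N' - i, C - 1 - j), ?_, ?_⟩
        · rw [YoungDiagram.mem_cells, hνmem]
          have heq : t + N' - (t + N' - i) = i := by omega
          rw [heq]
          omega
        · simp only [Prod.mk.injEq]
          exact ⟨by omega, by omega⟩
      · rintro ⟨⟨k, l⟩, hkl, heq⟩
        rw [YoungDiagram.mem_cells, hνmem] at hkl
        simp only [Prod.mk.injEq] at heq
        obtain ⟨he1, he2⟩ := heq
        have hI : t ≤ t + N' - k ∧ t + N' - k < t + (N'+1) := by omega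
        have hlr : lam.rowLen (t + N' - k) = C := hlamconst _ hI.1 hI.2
        rw [he1] at hkl hlr
        have hkl2 := hkl.2
        exact ⟨by omega, by omega⟩
    have hcard : ν.card = lam.card - mu.card := by
      have h2 : (ν.cells.image fun c => (t + N' - c.1, C - 1 - c.2)).card = ν.cells.card := by
        apply Finset.card_image_of_injOn
        intro x hx y hy hxy
        have hbx := hbounds x hx
        have hby := hbounds y hy
        simp only [Prod.mk.injEq] at hxy
        exact Prod.ext (by omega) (by omega)
      rw [← hcardγ, himg, h2]
    exact ⟨ν, hcard, Or.inr ⟨t + N', C - 1, hbounds, himg⟩⟩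
  · -- mu constant on the rows: straight shape
    have e4' : mu.rowLen ie ≤ mu.rowLen t := mu.rowLen_anti _ _ (by omega)
    have e3' : mu.rowLen i2 ≤ mu.rowLen istar := mu.rowLen_anti _ _ hcase
    have hmuconst : ∀ i, t ≤ i → i < t + (N'+1) → mu.rowLen i = mu.rowLen t := by
      intro i h1 h2
      rcases le_total i i2 with h | h
      · have f1 : mu.rowLen i2 ≤ mu.rowLen i := mu.rowLen_anti _ _ h
        have f2 : mu.rowLen i ≤ mu.rowLen t := mu.rowLen_anti _ _ h1
        omega
      · have f1 : mu.rowLen i ≤ mu.rowLen i2 := mu.rowLen_anti _ _ h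
        have f2 : mu.rowLen ie ≤ mu.rowLen i := mu.rowLen_anti _ _ (by omega)
        omega
    set m0 := mu.rowLen t with hm0
    have hsorted : ((List.range (N'+1)).map fun k => lam.rowLen (t + k) - m0).Pairwise (· ≥ ·) := by
      rw [List.pairwise_map]
      refine List.Pairwise.imp ?_ (List.pairwise_lt_range (n := _))
      intro a b hab
      have := lam.rowLen_anti (t + a) (t + b) (by omega)
      omega
    set ν := YoungDiagram.ofRowLens _ hsorted.sortedGE with hν
    have hνmem : ∀ k l : ℕ, ((k, l) ∈ ν ↔ k < N'+1 ∧ l < lam.rowLen (t + k) - m0) := by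
      intro k l
      rw [hν, YoungDiagram.mem_ofRowLens]
      constructor
      · rintro ⟨h1, h2⟩
        rw [List.length_map, List.length_range] at h1
        refine ⟨h1, ?_⟩
        rw [List.getElem_map, List.getElem_range] at h2
        exact h2
      · rintro ⟨h1, h2⟩
        refine ⟨by rw [List.length_map, List.length_range]; exact h1, ?_⟩
        rw [List.getElem_map, List.getElem_range]
        exact h2
    have himg : lam.cells \ mu.cells = ν.cells.image fun c => (c.1 + t, c.2 + m0) := by
      ext c
      obtain ⟨i, j⟩ := c
      rw [mem_skew_row, Finset.mem_image]
      constructor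
      · rintro ⟨h1, h2⟩
        have hr1 : 1 ≤ rowR lam mu i := by
          have : rowR lam mu i = lam.rowLen i - mu.rowLen i := rfl
          omega
        have hI := (hrow_iff i).mp hr1
        have hmr : mu.rowLen i = m0 := hmuconst i hI.1 hI.2
        refine ⟨(i - t, j - m0), ?_, ?_⟩
        · rw [YoungDiagram.mem_cells, hνmem]
          have heq : t + (i - t) = i := by omega
          rw [heq]
          omega
        · simp only [Prod.mk.injEq]
          exact ⟨by omega, by omega⟩
      · rintro ⟨⟨k, l⟩, hkl, heq⟩
        rw [YoungDiagram.mem_cells, hνmem] at hkl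
        simp only [Prod.mk.injEq] at heq
        obtain ⟨he1, he2⟩ := heq
        have hI : t ≤ k + t ∧ k + t < t + (N'+1) := by omega
        have hmr : mu.rowLen (k + t) = m0 := hmuconst _ hI.1 hI.2
        have hlr : lam.rowLen (t + k) = lam.rowLen (k + t) := by rw [Nat.add_comm]
        rw [show k + t = i by omega] at hmr hlr
        have hkl2 := hkl.2
        exact ⟨by omega, by omega⟩
    have hcard : ν.card = lam.card - mu.card := by
      have hinj : Function.Injective (fun c : ℕ × ℕ => (c.1 + t, c.2 + m0)) := by
        intro x y h
        simp only [Prod.mk.injEq] at h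
        exact Prod.ext (by omega) (by omega)
      have h2 : (ν.cells.image fun c => (c.1 + t, c.2 + m0)).card = ν.cells.card :=
        Finset.card_image_of_injective _ hinj
      rw [← hcardγ, himg, h2]
    exact ⟨ν, hcard, Or.inl ⟨t, m0, himg⟩⟩


end LRaux


/-- uniqueness lemma: for partitions `mu ⊂ lam` and the skew shape
`γ = [lam \ mu]`, the following are equivalent: (i) all LR fillings of `γ` have the same
type; (ii) there is a unique LR filling of `γ`; (iii) `γ` or its 180°-rotation is a
translate of the Young diagram of some partition `ν` of `|lam| - |mu|`. -/
theorem stmt6 (lam mu : YoungDiagram) (hsub : mu < lam)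
    (γ : Finset (ℕ × ℕ)) (hγ : γ = lam.cells \ mu.cells) :
    ((∀ T T' : ℕ × ℕ → ℕ, IsLRFilling γ T → IsLRFilling γ T' →
        ∀ v : ℕ, (γ.filter fun c => T c = v).card = (γ.filter fun c => T' c = v).card) ↔
      (∀ T T' : ℕ × ℕ → ℕ, IsLRFilling γ T → IsLRFilling γ T' → ∀ c ∈ γ, T c = T' c)) ∧
    ((∀ T T' : ℕ × ℕ → ℕ, IsLRFilling γ T → IsLRFilling γ T' → ∀ c ∈ γ, T c = T' c) ↔
      (∃ ν : YoungDiagram, ν.card = lam.card - mu.card ∧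
        (IsTranslateOf γ ν.cells ∨ IsRotTranslateOf γ ν.cells))) := by
  subst hγ
  have hmu : mu ≤ lam := le_of_lt hsub
  have h32 : (∃ ν : YoungDiagram, ν.card = lam.card - mu.card ∧
      (IsTranslateOf (lam.cells \ mu.cells) ν.cells
        ∨ IsRotTranslateOf (lam.cells \ mu.cells) ν.cells)) →
      (∀ T T' : ℕ × ℕ → ℕ, IsLRFilling (lam.cells \ mu.cells) T →
        IsLRFilling (lam.cells \ mu.cells) T' →
        ∀ c ∈ lam.cells \ mu.cells, T c = T' c) := by
    rintro ⟨ν, _, h | h⟩ T T' hT hT' c hc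
    · obtain ⟨a, b, himg⟩ := h
      rw [himg] at hT hT' hc
      obtain ⟨⟨k, l⟩, hkl, rfl⟩ := Finset.mem_image.mp hc
      have e1 := LRaux.unique_straight ν a b T hT k l ((YoungDiagram.mem_cells _).mp hkl)
      have e2 := LRaux.unique_straight ν a b T' hT' k l ((YoungDiagram.mem_cells _).mp hkl)
      rw [e1, e2]
    · obtain ⟨a, b, hb, himg⟩ := h
      rw [himg] at hT hT' hc
      obtain ⟨⟨k, l⟩, hkl, rfl⟩ := Finset.mem_image.mp hc
      have e1 := LRaux.unique_rot ν a b hb T hT k l ((YoungDiagram.mem_cells _).mp hkl)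
      have e2 := LRaux.unique_rot ν a b hb T' hT' k l ((YoungDiagram.mem_cells _).mp hkl)
      rw [e1, e2]
  have h21 : (∀ T T' : ℕ × ℕ → ℕ, IsLRFilling (lam.cells \ mu.cells) T →
      IsLRFilling (lam.cells \ mu.cells) T' →
      ∀ c ∈ lam.cells \ mu.cells, T c = T' c) →
      (∀ T T' : ℕ × ℕ → ℕ, IsLRFilling (lam.cells \ mu.cells) T →
        IsLRFilling (lam.cells \ mu.cells) T' →
        ∀ v : ℕ, ((lam.cells \ mu.cells).filter fun c => T c = v).card
          = ((lam.cells \ mu.cells).filter fun c => T' c = v).card) := by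
    intro h T T' hT hT' v
    congr 1
    apply Finset.filter_congr
    intro c hc
    rw [h T T' hT hT' c hc]
  have h13 : (∀ T T' : ℕ × ℕ → ℕ, IsLRFilling (lam.cells \ mu.cells) T →
      IsLRFilling (lam.cells \ mu.cells) T' →
      ∀ v : ℕ, ((lam.cells \ mu.cells).filter fun c => T c = v).card
        = ((lam.cells \ mu.cells).filter fun c => T' c = v).card) →
      (∃ ν : YoungDiagram, ν.card = lam.card - mu.card ∧
        (IsTranslateOf (lam.cells \ mu.cells) ν.cells
          ∨ IsRotTranslateOf (lam.cells \ mu.cells) ν.cells)) := by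
    intro h
    apply LRaux.main_shape lam mu hsub
    intro v
    have h1 := h (LRaux.Tcol mu) (LRaux.Trow lam mu) (LRaux.Tcol_isLR lam mu)
      (LRaux.Trow_isLR hmu) (v+1)
    rw [LRaux.Tcol_content lam mu v, LRaux.Trow_content hmu v] at h1
    exact h1
  exact ⟨⟨fun h => h32 (h13 h), h21⟩, ⟨fun h => h13 (h21 h), h32⟩⟩
end

section
/- Let $p$ be an odd prime and $k, a, b \in \mathbb{N}$ with $a + b = k$ and $a, b \geq 1$. Let $\lambda = ((2p^b)^{p^a})$, the rectangular partition of $2p^k$ with $p^a$ rows each of length $2p^b$. Write $p^k - p^a = c(2p^b - 1) + d$ with $0 \le d < 2p^b - 1$. Then $c \ge 1$, $p^a \ge c + 1$, and setting $\mu = ((2p^b)^c, d+1, 1^{p^a - c - 1})$, the skew diagram $[\lambda \setminus \mu]$ is, after $180°$-rotation, a translate of the Young diagram of a partition $\nu$ with first part $\nu_1 = 2p^b - 1$; consequently the Littlewood–Richardson coefficient $c^\lambda_{\mu\nu}$ equals $1$ and $\mu \neq \nu$. -/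
namespace Stmt16Aux

lemma rowLen_eq_getD (μ : YoungDiagram) (i : ℕ) : μ.rowLen i = μ.rowLens.getD i 0 := by
  by_cases h : i < μ.rowLens.length
  · rw [List.getD_eq_getElem _ _ h, YoungDiagram.get_rowLens]
  · rw [List.getD_eq_default _ _ (le_of_not_gt h)]
    push_neg at h
    rw [YoungDiagram.length_rowLens] at h
    by_contra h0
    have h1 : (i, 0) ∈ μ := YoungDiagram.mem_iff_lt_rowLen.2 (Nat.pos_of_ne_zero h0)
    have h2 := YoungDiagram.mem_iff_lt_colLen.1 h1
    omega

lemma getD_rep (n x i : ℕ) : (List.replicate n x).getD i 0 = if i < n then x else 0 := by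
  by_cases h : i < n
  · rw [List.getD_eq_getElem _ _ (by simpa using h), List.getElem_replicate, if_pos h]
  · rw [List.getD_eq_default _ _ (by simpa using le_of_not_gt h), if_neg h]

lemma getD_rep_append (n x : ℕ) (l : List ℕ) (i : ℕ) :
    (List.replicate n x ++ l).getD i 0 = if i < n then x else l.getD (i - n) 0 := by
  by_cases h : i < n
  · rw [List.getD_append _ _ _ _ (by simpa using h), getD_rep, if_pos h, if_pos h]
  · rw [List.getD_append_right _ _ _ _ (by simpa using le_of_not_gt h), if_neg h,
      List.length_replicate]

lemma sorted_rep_app (n x y : ℕ) (h : y ≤ x) :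
    (List.replicate n x ++ [y]).Pairwise (· ≥ ·) := by
  induction n with
  | zero => simp
  | succ n ih =>
    rw [List.replicate_succ, List.cons_append]
    refine List.pairwise_cons.2 ⟨fun b hb => ?_, ih⟩
    rcases List.mem_append.1 hb with hb | hb
    · rw [List.eq_of_mem_replicate hb]
    · rw [List.mem_singleton.1 hb]; exact h

def seg (r u v : ℕ) : Finset (ℕ × ℕ) := (Finset.Ico u v).image fun j => (r, j)

lemma mem_seg {r u v : ℕ} {x : ℕ × ℕ} : x ∈ seg r u v ↔ x.1 = r ∧ u ≤ x.2 ∧ x.2 < v := by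
  obtain ⟨i, j⟩ := x
  simp only [seg, Finset.mem_image, Finset.mem_Ico, Prod.mk.injEq]
  constructor
  · rintro ⟨j', ⟨h1, h2⟩, rfl, rfl⟩; exact ⟨rfl, h1, h2⟩
  · rintro ⟨rfl, h1, h2⟩; exact ⟨j, ⟨h1, h2⟩, rfl, rfl⟩

lemma card_seg (r u v : ℕ) : (seg r u v).card = v - u := by
  rw [seg, Finset.card_image_of_injective _ (fun a b h => by simpa using h), Nat.card_Ico]

lemma card_seg_union {r1 u1 v1 r2 u2 v2 : ℕ} (h : r1 ≠ r2) :
    (seg r1 u1 v1 ∪ seg r2 u2 v2).card = (v1 - u1) + (v2 - u2) := by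
  rw [Finset.card_union_of_disjoint, card_seg, card_seg]
  rw [Finset.disjoint_left]
  intro x hx hx'
  rw [mem_seg] at hx hx'
  omega

lemma card_filter_eq_of_iff {s t : Finset (ℕ × ℕ)} {p : ℕ × ℕ → Prop} [DecidablePred p]
    (h : ∀ x, x ∈ s ∧ p x ↔ x ∈ t) : (s.filter p).card = t.card := by
  congr 1
  ext x
  rw [Finset.mem_filter, h]

lemma card_filter_gt {s : Finset (ℕ × ℕ)} {p q : ℕ × ℕ → Prop} [DecidablePred p]
    [DecidablePred q] {t1 t2 : Finset (ℕ × ℕ)}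
    (hp : ∀ x, x ∈ s ∧ p x ↔ x ∈ t1) (hq : ∀ x, x ∈ s ∧ q x ↔ x ∈ t2)
    (h : t2.card < t1.card) : (s.filter p).card > (s.filter q).card := by
  rw [card_filter_eq_of_iff hp, card_filter_eq_of_iff hq]
  exact h

section Core

variable {P Q c d : ℕ} {γ : Finset (ℕ × ℕ)}

/-- The skew-shape characterization hypothesis. -/
def SkewDesc (P Q c d : ℕ) (γ : Finset (ℕ × ℕ)) : Prop :=
  ∀ u v : ℕ, ((u, v) ∈ γ ↔
    ((u = c ∧ d + 1 ≤ v ∧ v < 2 * Q) ∨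
      (c + 1 ≤ u ∧ u < P ∧ 1 ≤ v ∧ v < 2 * Q)))

lemma aux_pos (hc1 : 1 ≤ c) (hsk : SkewDesc P Q c d γ) :
    ∀ x ∈ γ, 1 ≤ x.1 - c + min (x.2 - d) 1 := by
  rintro ⟨u, v⟩ hx
  rw [hsk] at hx
  try dsimp only
  omega

lemma aux_filling (hQg : 3 ≤ Q) (hdlt : d < 2 * Q - 1) (hc1 : 1 ≤ c) (hcP : c + 2 ≤ P)
    (hsk : SkewDesc P Q c d γ) :
    IsLRFilling γ (fun x => x.1 - c + min (x.2 - d) 1) := by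
  refine ⟨aux_pos hc1 hsk, ?_, ?_, ?_⟩
  · rintro ⟨u, v⟩ hx ⟨u', v'⟩ hx' h1 h2
    rw [hsk] at hx hx'
    try dsimp only at h1 h2 ⊢
    omega
  · rintro ⟨u, v⟩ hx ⟨u', v'⟩ hx' h1 h2
    rw [hsk] at hx hx'
    try dsimp only at h1 h2 ⊢
    omega
  · rintro ⟨u, v⟩ hx ht
    rw [hsk] at hx
    try dsimp only at ht ⊢
    by_cases hv : d + 1 ≤ v
    · refine card_filter_gt (t1 := seg (u - 1) (d + 1) (2 * Q))
        (t2 := seg u (v + 1) (2 * Q)) ?_ ?_ ?_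
      · rintro ⟨x, y⟩
        rw [hsk, mem_seg]
        try dsimp only
        omega
      · rintro ⟨x, y⟩
        rw [hsk, mem_seg]
        try dsimp only
        omega
      · rw [card_seg, card_seg]
        omega
    · refine card_filter_gt (t1 := seg (u - 2) (d + 1) (2 * Q) ∪ seg (u - 1) 1 (d + 1))
        (t2 := seg (u - 1) (d + 1) (2 * Q) ∪ seg u (v + 1) (d + 1)) ?_ ?_ ?_
      · rintro ⟨x, y⟩
        rw [hsk, Finset.mem_union, mem_seg, mem_seg]
        try dsimp only
        omega
      · rintro ⟨x, y⟩
        rw [hsk, Finset.mem_union, mem_seg, mem_seg]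
        try dsimp only
        omega
      · rw [card_seg_union (by omega), card_seg_union (by omega)]
        omega

lemma aux_type (hQg : 3 ≤ Q) (hdlt : d < 2 * Q - 1) (hc1 : 1 ≤ c) (hcP : c + 2 ≤ P)
    (hsk : SkewDesc P Q c d γ) :
    ∀ v : ℕ, (γ.filter fun x => x.1 - c + min (x.2 - d) 1 = v + 1).card
      = if v < P - c - 1 then 2 * Q - 1 else if v = P - c - 1 then 2 * Q - 1 - d else 0 := by
  intro v
  by_cases h1 : v < P - c - 1
  · rw [if_pos h1]
    refine (card_filter_eq_of_iff
        (t := seg (c + v) (d + 1) (2 * Q) ∪ seg (c + v + 1) 1 (d + 1)) ?_).trans ?_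
    · rintro ⟨x, y⟩
      rw [hsk, Finset.mem_union, mem_seg, mem_seg]
      try dsimp only
      omega
    · rw [card_seg_union (by omega)]
      omega
  · rw [if_neg h1]
    by_cases h2 : v = P - c - 1
    · rw [if_pos h2]
      refine (card_filter_eq_of_iff (t := seg (P - 1) (d + 1) (2 * Q)) ?_).trans ?_
      · rintro ⟨x, y⟩
        rw [hsk, mem_seg]
        try dsimp only
        omega
      · rw [card_seg]
        omega
    · rw [if_neg h2]
      refine (card_filter_eq_of_iff (t := (∅ : Finset (ℕ × ℕ))) ?_).trans Finset.card_empty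
      rintro ⟨x, y⟩
      rw [hsk]
      simp only [Finset.notMem_empty, iff_false, not_and]
      try dsimp only
      omega

lemma aux_lb (hc1 : 1 ≤ c) (hsk : SkewDesc P Q c d γ)
    (T : ℕ × ℕ → ℕ) (hT : IsLRFilling γ T) :
    ∀ u v : ℕ, (u, v) ∈ γ → u - c + min (v - d) 1 ≤ T (u, v) := by
  obtain ⟨hTp, -, hTcol, -⟩ := hT
  intro u
  induction u with
  | zero =>
    intro v hv
    rw [hsk] at hv
    omega
  | succ n ih =>
    intro v hv
    by_cases h2 : n + 1 - c + min (v - d) 1 ≤ 1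
    · exact le_trans h2 (hTp _ hv)
    · have hv' : (n, v) ∈ γ := by
        rw [hsk] at hv ⊢
        omega
      have h3 := hTcol (n, v) hv' (n + 1, v) hv rfl (Nat.lt_succ_self n)
      have h4 := ih v hv'
      omega

lemma aux_sum {l : List ℕ} (hlen : l.length = P - c)
    (T : ℕ × ℕ → ℕ) (hTpos : ∀ x ∈ γ, 1 ≤ T x)
    (hTtype : ∀ v : ℕ, (γ.filter fun x => T x = v + 1).card = l.getD v 0) :
    ∑ x ∈ γ, T x = ∑ v ∈ Finset.range (P - c), (v + 1) * l.getD v 0 := by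
  have hmaps : ∀ x ∈ γ, T x - 1 ∈ Finset.range (P - c) := by
    intro x hx
    rw [Finset.mem_range]
    by_contra hcon
    have h0 := hTtype (T x - 1)
    have hxmem : x ∈ γ.filter fun c' => T c' = T x - 1 + 1 := by
      rw [Finset.mem_filter]
      have := hTpos x hx
      exact ⟨hx, by omega⟩
    have h2 : 0 < (γ.filter fun c' => T c' = T x - 1 + 1).card :=
      Finset.card_pos.2 ⟨x, hxmem⟩
    rw [h0, List.getD_eq_default _ _ (by omega)] at h2
    omega
  rw [← Finset.sum_fiberwise_of_maps_to hmaps T]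
  refine Finset.sum_congr rfl fun v hv => ?_
  have hfeq : (γ.filter fun x => T x - 1 = v) = γ.filter fun x => T x = v + 1 := by
    apply Finset.filter_congr
    intro x hx
    have := hTpos x hx
    constructor <;> intro <;> omega
  rw [hfeq,
    Finset.sum_congr rfl (fun x hx => (Finset.mem_filter.1 hx).2),
    Finset.sum_const, hTtype v, smul_eq_mul, mul_comm]

lemma aux_uniq (hQg : 3 ≤ Q) (hdlt : d < 2 * Q - 1) (hc1 : 1 ≤ c) (hcP : c + 2 ≤ P)
    (hsk : SkewDesc P Q c d γ) {l : List ℕ} (hlen : l.length = P - c)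
    (hl : ∀ v : ℕ, l.getD v 0
      = if v < P - c - 1 then 2 * Q - 1 else if v = P - c - 1 then 2 * Q - 1 - d else 0)
    (T : ℕ × ℕ → ℕ) (hT : IsLRFilling γ T)
    (hTtype : ∀ v : ℕ, (γ.filter fun x => T x = v + 1).card = l.getD v 0) :
    ∀ x ∈ γ, T x = x.1 - c + min (x.2 - d) 1 := by
  have h1 : ∀ x ∈ γ, x.1 - c + min (x.2 - d) 1 ≤ T x := by
    rintro ⟨u, v⟩ hx
    exact aux_lb hc1 hsk T hT u v hx
  have h2 : ∑ x ∈ γ, T x = ∑ v ∈ Finset.range (P - c), (v + 1) * l.getD v 0 :=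
    aux_sum hlen T hT.1 hTtype
  have h3 : (∑ x ∈ γ, (x.1 - c + min (x.2 - d) 1))
      = ∑ v ∈ Finset.range (P - c), (v + 1) * l.getD v 0 := by
    apply aux_sum hlen _ (aux_pos hc1 hsk)
    intro v
    rw [hl v]
    exact aux_type hQg hdlt hc1 hcP hsk v
  intro x hx
  by_contra hne
  have h4 : x.1 - c + min (x.2 - d) 1 < T x :=
    lt_of_le_of_ne (h1 x hx) (fun h => hne h.symm)
  have h5 : (∑ x ∈ γ, (x.1 - c + min (x.2 - d) 1)) < ∑ x ∈ γ, T x :=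
    Finset.sum_lt_sum h1 ⟨x, hx, h4⟩
  omega

end Core

end Stmt16Aux

open Stmt16Aux in
/-- for the rectangle `lam = ((2p^b)^(p^a)) ⊢ 2p^k` (`k = a + b`, `a,b ≥ 1`),
writing `p^k - p^a = c(2p^b - 1) + d` with `0 ≤ d < 2p^b - 1` and setting
`mu = ((2p^b)^c, d+1, 1^(p^a-c-1))`, one has `c ≥ 1`, `p^a ≥ c + 1`, the 180°-rotation of
`[lam \ mu]` is a translate of the diagram of a partition `nu` with first part `2p^b - 1`,
`mu ≠ nu`, and the LR coefficient `c^lam_(mu,nu)` equals `1`. -/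
theorem stmt16 (p a b k c d : ℕ) (hp : p.Prime) (hodd : Odd p)
    (ha : 1 ≤ a) (hb : 1 ≤ b) (hk : k = a + b)
    (hc : c = (p ^ k - p ^ a) / (2 * p ^ b - 1))
    (hd : d = (p ^ k - p ^ a) % (2 * p ^ b - 1))
    (lam mu : YoungDiagram)
    (hlam : lam.rowLens = List.replicate (p ^ a) (2 * p ^ b))
    (hmu : mu.rowLens =
      List.replicate c (2 * p ^ b) ++ (d + 1) :: List.replicate (p ^ a - c - 1) 1) :
    1 ≤ c ∧ c + 1 ≤ p ^ a ∧
    ∃ nu : YoungDiagram,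
      nu.rowLen 0 = 2 * p ^ b - 1 ∧
      IsRotTranslateOf (lam.cells \ mu.cells) nu.cells ∧
      nu ≠ mu ∧
      (∃ T : ℕ × ℕ → ℕ, IsLRFilling (lam.cells \ mu.cells) T ∧
        IsTypeOfList (lam.cells \ mu.cells) T nu.rowLens) ∧
      (∀ T T' : ℕ × ℕ → ℕ,
        IsLRFilling (lam.cells \ mu.cells) T → IsTypeOfList (lam.cells \ mu.cells) T nu.rowLens →
        IsLRFilling (lam.cells \ mu.cells) T' → IsTypeOfList (lam.cells \ mu.cells) T' nu.rowLens →
        ∀ x ∈ lam.cells \ mu.cells, T x = T' x) := by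
  classical
  set P := p ^ a with hPdef
  set Q := p ^ b with hQdef
  -- basic arithmetic
  have hp3 : 3 ≤ p := by
    have h2 := hp.two_le
    rcases hodd with ⟨t, ht⟩
    omega
  have hPg : 3 ≤ P := le_trans hp3 (Nat.le_self_pow (by omega) p)
  have hQg : 3 ≤ Q := le_trans hp3 (Nat.le_self_pow (by omega) p)
  have hPQ : p ^ k = P * Q := by rw [hk, pow_add]
  clear_value P Q
  have hE : P * Q - P = P * (Q - 1) := by rw [Nat.mul_sub, Nat.mul_one]
  have hE3 : 3 * (Q - 1) ≤ P * (Q - 1) := Nat.mul_le_mul_right _ hPg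
  have hdlt : d < 2 * Q - 1 := by
    rw [hd]; exact Nat.mod_lt _ (by omega)
  have hkey : c * (2 * Q - 1) + d = P * (Q - 1) := by
    rw [hc, hd, hPQ, hE]; exact Nat.div_add_mod' _ _
  have hc1 : 1 ≤ c := by
    rcases Nat.eq_zero_or_pos c with h | h
    · rw [h] at hkey; omega
    · exact h
  have h2c : 2 * c < P := by
    have h1 : 2 * c * (2 * Q - 1) < P * (2 * Q - 1) := by
      calc 2 * c * (2 * Q - 1) = 2 * (c * (2 * Q - 1)) := by ring
        _ ≤ 2 * (P * (Q - 1)) := by omega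
        _ = P * (2 * (Q - 1)) := by ring
        _ < P * (2 * Q - 1) := by
            exact Nat.mul_lt_mul_of_le_of_lt (le_refl P) (by omega) (by omega)
    exact Nat.lt_of_mul_lt_mul_right h1
  have hcP : c + 2 ≤ P := by omega
  clear hc hd hPQ hE hE3 hkey h2c hp hodd ha hb hk hp3
  -- row length descriptions
  have hlamLen : ∀ i, lam.rowLen i = if i < P then 2 * Q else 0 := fun i => by
    rw [rowLen_eq_getD, hlam, getD_rep]
  have hmuLen : ∀ i, mu.rowLen i =
      if i < c then 2 * Q else if i = c then d + 1 else if i < P then 1 else 0 := by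
    intro i
    rw [rowLen_eq_getD, hmu, getD_rep_append]
    by_cases h1 : i < c
    · rw [if_pos h1, if_pos h1]
    · rw [if_neg h1, if_neg h1]
      by_cases h2 : i = c
      · have h3 : i - c = 0 := by omega
        rw [h3, List.getD_cons_zero, if_pos h2]
      · rw [if_neg h2]
        have h3 : i - c = (i - c - 1) + 1 := by omega
        rw [h3, List.getD_cons_succ, getD_rep]
        by_cases h4 : i < P
        · rw [if_pos (by omega), if_pos h4]
        · rw [if_neg (by omega), if_neg h4]
  have hsk : SkewDesc P Q c d (lam.cells \ mu.cells) := by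
    intro u v
    rw [Finset.mem_sdiff, YoungDiagram.mem_cells, YoungDiagram.mem_cells,
      YoungDiagram.mem_iff_lt_rowLen, YoungDiagram.mem_iff_lt_rowLen, hlamLen, hmuLen]
    split_ifs <;> omega
  clear hlam hmu hlamLen
  -- the partition nu
  set w : List ℕ := List.replicate (P - c - 1) (2 * Q - 1) ++ [2 * Q - 1 - d] with hwdef
  clear_value w
  have hsort : w.SortedGE := by
    rw [hwdef]; exact (sorted_rep_app _ _ _ (by omega)).sortedGE
  have hwpos : ∀ z ∈ w, 0 < z := by
    intro z hz
    rw [hwdef] at hz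
    rcases List.mem_append.1 hz with h | h
    · rw [List.eq_of_mem_replicate h]; omega
    · rw [List.mem_singleton.1 h]; omega
  have hwgetD : ∀ i, w.getD i 0 =
      if i < P - c - 1 then 2 * Q - 1 else if i = P - c - 1 then 2 * Q - 1 - d else 0 := by
    intro i
    rw [hwdef, getD_rep_append]
    by_cases h1 : i < P - c - 1
    · rw [if_pos h1, if_pos h1]
    · rw [if_neg h1, if_neg h1]
      by_cases h2 : i = P - c - 1
      · have h3 : i - (P - c - 1) = 0 := by omega
        rw [h3, List.getD_cons_zero, if_pos h2]
      · have h3 : i - (P - c - 1) = (i - (P - c - 1) - 1) + 1 := by omega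
        rw [h3, if_neg h2]
        simp
  have hwlen : w.length = P - c := by
    rw [hwdef, List.length_append, List.length_replicate, List.length_singleton]
    omega
  have hnuLens : (YoungDiagram.ofRowLens w hsort).rowLens = w :=
    YoungDiagram.rowLens_ofRowLens_eq_self hwpos
  have hnumem : ∀ x : ℕ × ℕ, x ∈ YoungDiagram.ofRowLens w hsort ↔
      x.2 < (if x.1 < P - c - 1 then 2 * Q - 1 else
        if x.1 = P - c - 1 then 2 * Q - 1 - d else 0) := by
    rintro ⟨u, v⟩
    rw [YoungDiagram.mem_iff_lt_rowLen, rowLen_eq_getD, hnuLens, hwgetD]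
  refine ⟨hc1, by omega, YoungDiagram.ofRowLens w hsort, ?_, ?_, ?_, ?_, ?_⟩
  · -- first row length of nu
    rw [rowLen_eq_getD, hnuLens, hwgetD, if_pos (by omega)]
  · -- rotation-translate
    refine ⟨P - 1, 2 * Q - 1, ?_, ?_⟩
    · rintro ⟨u, v⟩ hx
      rw [YoungDiagram.mem_cells, hnumem] at hx
      try dsimp only at hx ⊢
      split_ifs at hx <;> omega
    · ext ⟨u, v⟩
      simp only [Finset.mem_image, YoungDiagram.mem_cells]
      constructor
      · intro hx
        rw [hsk] at hx
        refine ⟨(P - 1 - u, 2 * Q - 1 - v), ?_, ?_⟩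
        · rw [hnumem]
          try dsimp only
          split_ifs <;> omega
        · simp only [Prod.mk.injEq]
          constructor <;> omega
      · rintro ⟨⟨x, y⟩, hy, heq⟩
        rw [hnumem] at hy
        simp only [Prod.mk.injEq] at heq
        rw [hsk]
        try dsimp only at hy
        split_ifs at hy <;> omega
  · -- nu ≠ mu
    intro h
    have h0 := congrArg (fun ν : YoungDiagram => ν.rowLen 0) h
    rw [rowLen_eq_getD, hnuLens, hwgetD, if_pos (by omega), hmuLen 0, if_pos (by omega)] at h0
    omega
  · -- existence of the LR filling
    refine ⟨fun x => x.1 - c + min (x.2 - d) 1, aux_filling hQg hdlt hc1 hcP hsk, ?_⟩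
    intro v
    rw [hnuLens, hwgetD]
    exact aux_type hQg hdlt hc1 hcP hsk v
  · -- uniqueness
    have hl : ∀ v : ℕ, w.getD v 0
        = if v < P - c - 1 then 2 * Q - 1 else if v = P - c - 1 then 2 * Q - 1 - d else 0 :=
      hwgetD
    intro T T' hT hTtype hT' hTtype' x hx
    have e1 := aux_uniq hQg hdlt hc1 hcP hsk hwlen hl T hT
      (fun v => by rw [← hnuLens]; exact hTtype v) x hx
    have e2 := aux_uniq hQg hdlt hc1 hcP hsk hwlen hl T' hT'
      (fun v => by rw [← hnuLens]; exact hTtype' v) x hx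
    rw [e1, e2]
end

section
/- Let $n \geq 2$, suppose $\lambda \vdash n$ with $\lambda_2 \geq 2$, and let $m < n$ with $m \geq 4$. Then there exists a partition $\nu$ of $m$ with $\nu \notin \{(m-1,1), (2,1^{m-2})\}$ such that the Young diagram of $\nu$ is contained in the Young diagram of $\lambda$. -/
/-- Erase a corner cell from a Young diagram. -/
def eraseCell (mu : YoungDiagram) (i j : ℕ) (h1 : (i + 1, j) ∉ mu)
    (h2 : (i, j + 1) ∉ mu) : YoungDiagram where
  cells := mu.cells.erase (i, j)
  isLowerSet := by
    intro a b hba ha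
    simp only [Finset.coe_erase, Set.mem_diff, Set.mem_singleton_iff] at ha ⊢
    obtain ⟨ha1, ha2⟩ := ha
    have ha1' : a ∈ mu := ha1
    refine ⟨mu.isLowerSet hba ha1, ?_⟩
    rintro rfl
    have hi : i ≤ a.1 := hba.1
    have hj : j ≤ a.2 := hba.2
    rcases lt_or_eq_of_le hi with h | h
    · exact h1 (mu.up_left_mem h hj (by simpa using ha1'))
    · rcases lt_or_eq_of_le hj with h' | h'
      · exact h2 (mu.up_left_mem (le_of_eq h) h' (by simpa using ha1'))
      · exact ha2 (Prod.ext_iff.mpr ⟨h.symm, h'.symm⟩)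

lemma eraseCell_le (mu : YoungDiagram) (i j : ℕ) (h1 : (i + 1, j) ∉ mu)
    (h2 : (i, j + 1) ∉ mu) : eraseCell mu i j h1 h2 ≤ mu :=
  Finset.erase_subset _ _

lemma eraseCell_card (mu : YoungDiagram) (i j : ℕ) (h1 : (i + 1, j) ∉ mu)
    (h2 : (i, j + 1) ∉ mu) (hmem : (i, j) ∈ mu) :
    (eraseCell mu i j h1 h2).card + 1 = mu.card := by
  simpa [eraseCell, YoungDiagram.card, Finset.card_erase_of_mem hmem] using
    Nat.succ_pred_eq_of_pos (Finset.card_pos.mpr ⟨_, hmem⟩)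

lemma mem_eraseCell {mu : YoungDiagram} {i j : ℕ} {h1 : (i + 1, j) ∉ mu}
    {h2 : (i, j + 1) ∉ mu} {c : ℕ × ℕ} :
    c ∈ eraseCell mu i j h1 h2 ↔ c ≠ (i, j) ∧ c ∈ mu := by
  show c ∈ mu.cells.erase (i, j) ↔ _
  simp [eraseCell, YoungDiagram.mem_cells, Finset.mem_erase]

/-- Shrink by one cell, keeping `rowLen 1 ≥ 2`. -/
lemma shrink (mu : YoungDiagram) (h2 : 2 ≤ mu.rowLen 1) (h5 : 5 ≤ mu.card) :
    ∃ nu : YoungDiagram, nu ≤ mu ∧ nu.card + 1 = mu.card ∧ 2 ≤ nu.rowLen 1 := by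
  have h11 : (1, 1) ∈ mu := YoungDiagram.mem_iff_lt_rowLen.mpr (by omega)
  rcases lt_or_ge (mu.rowLen 1) (mu.rowLen 0) with hlt | hle
  · -- remove end of row 0
    have hL0 : 1 ≤ mu.rowLen 0 := by omega
    have hmem : (0, mu.rowLen 0 - 1) ∈ mu := YoungDiagram.mem_iff_lt_rowLen.mpr (by omega)
    have h1 : (0 + 1, mu.rowLen 0 - 1) ∉ mu := by
      simp only [Nat.zero_add, YoungDiagram.mem_iff_lt_rowLen]; omega
    have h2' : (0, mu.rowLen 0 - 1 + 1) ∉ mu := by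
      rw [YoungDiagram.mem_iff_lt_rowLen]; omega
    refine ⟨eraseCell mu 0 _ h1 h2', eraseCell_le _ _ _ _ _,
      eraseCell_card _ _ _ _ _ hmem, ?_⟩
    refine YoungDiagram.mem_iff_lt_rowLen.mp (mem_eraseCell.mpr ⟨?_, h11⟩)
    simp only [ne_eq, Prod.mk.injEq]
    omega
  · rcases lt_or_ge (mu.colLen 0) 3 with hc | hc
    · -- at most 2 rows; rowLen 0 ≤ rowLen 1, so rowLen 0 = rowLen 1 = L ≥ 3 since card ≥ 5
      have hL : mu.rowLen 0 = mu.rowLen 1 := le_antisymm hle (mu.rowLen_anti 0 1 (by omega))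
      have hsub : mu.cells ⊆ Finset.range 2 ×ˢ Finset.range (mu.rowLen 0) := by
        intro c hc'
        have hc'' : c ∈ mu := hc'
        obtain ⟨a, b⟩ := c
        simp only [Finset.mem_product, Finset.mem_range]
        constructor
        · have := YoungDiagram.mem_iff_lt_colLen.mp (mu.up_left_mem (le_refl a) (Nat.zero_le b) hc'')
          omega
        · have := YoungDiagram.mem_iff_lt_rowLen.mp hc''
          have := mu.rowLen_anti 0 a (Nat.zero_le a)
          omega
      have hcard : mu.card ≤ 2 * mu.rowLen 0 := by
        have := Finset.card_le_card hsub
        simpa [Finset.card_product, two_mul] using this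
      have hL3 : 3 ≤ mu.rowLen 1 := by omega
      -- remove end of row 1
      have hmem : (1, mu.rowLen 1 - 1) ∈ mu := YoungDiagram.mem_iff_lt_rowLen.mpr (by omega)
      have h1 : (1 + 1, mu.rowLen 1 - 1) ∉ mu := by
        rw [YoungDiagram.mem_iff_lt_colLen]
        have : mu.colLen (mu.rowLen 1 - 1) ≤ mu.colLen 0 := mu.colLen_anti 0 _ (Nat.zero_le _)
        omega
      have h2' : (1, mu.rowLen 1 - 1 + 1) ∉ mu := by
        rw [YoungDiagram.mem_iff_lt_rowLen]; omega
      refine ⟨eraseCell mu 1 _ h1 h2', eraseCell_le _ _ _ _ _,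
        eraseCell_card _ _ _ _ _ hmem, ?_⟩
      refine YoungDiagram.mem_iff_lt_rowLen.mp (mem_eraseCell.mpr ⟨?_, h11⟩)
      simp only [ne_eq, Prod.mk.injEq]
      omega
    · -- at least 3 rows: remove end of last row
      set r := mu.colLen 0 - 1 with hr
      have hr2 : 2 ≤ r := by omega
      have hr0 : (r, 0) ∈ mu := YoungDiagram.mem_iff_lt_colLen.mpr (by omega)
      have hrl : 1 ≤ mu.rowLen r := by
        have := YoungDiagram.mem_iff_lt_rowLen.mp hr0; omega
      have hmem : (r, mu.rowLen r - 1) ∈ mu := YoungDiagram.mem_iff_lt_rowLen.mpr (by omega)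
      have h1 : (r + 1, mu.rowLen r - 1) ∉ mu := by
        intro hmem'
        have : (r + 1, 0) ∈ mu := mu.up_left_mem (le_refl _) (Nat.zero_le _) hmem'
        have := YoungDiagram.mem_iff_lt_colLen.mp this
        omega
      have h2' : (r, mu.rowLen r - 1 + 1) ∉ mu := by
        rw [YoungDiagram.mem_iff_lt_rowLen]; omega
      refine ⟨eraseCell mu r _ h1 h2', eraseCell_le _ _ _ _ _,
        eraseCell_card _ _ _ _ _ hmem, ?_⟩
      refine YoungDiagram.mem_iff_lt_rowLen.mp (mem_eraseCell.mpr ⟨?_, h11⟩)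
      simp only [ne_eq, Prod.mk.injEq]
      omega

lemma down (k : ℕ) : ∀ (mu : YoungDiagram) (m : ℕ), mu.card = m + k → 4 ≤ m →
    2 ≤ mu.rowLen 1 → ∃ nu : YoungDiagram, nu ≤ mu ∧ nu.card = m ∧ 2 ≤ nu.rowLen 1 := by
  induction k with
  | zero => intro mu m hc _ h2; exact ⟨mu, le_refl _, by omega, h2⟩
  | succ k ih =>
    intro mu m hc hm h2
    obtain ⟨nu, hle, hcard, h2'⟩ := shrink mu h2 (by omega)
    obtain ⟨nu', hle', hcard', h2''⟩ := ih nu m (by omega) hm h2'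
    exact ⟨nu', le_trans hle' hle, hcard', h2''⟩

/-- if `lam ⊢ n` has second part at least `2`, and `4 ≤ m < n`, then there is
a partition `nu ⊢ m` with `nu ∉ {(m-1,1), (2,1^(m-2))}` whose Young diagram is contained in
that of `lam`. -/
theorem stmt17 (n m : ℕ) (lam : YoungDiagram) (hlam : lam.card = n)
    (h2 : 2 ≤ lam.rowLen 1) (hm4 : 4 ≤ m) (hmn : m < n) :
    ∃ nu : YoungDiagram, nu.card = m ∧
      nu.rowLens ≠ [m - 1, 1] ∧ nu.rowLens ≠ 2 :: List.replicate (m - 2) 1 ∧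
      nu ≤ lam := by
  obtain ⟨nu, hle, hcard, h2'⟩ := down (n - m) lam m (by omega) hm4 h2
  refine ⟨nu, hcard, ?_, ?_, hle⟩
  · intro h
    have hlen : nu.rowLens.length = 2 := by rw [h]; rfl
    have h1lt : (1 : ℕ) < nu.rowLens.length := by omega
    have := @YoungDiagram.get_rowLens nu 1 h1lt
    simp only [h, List.getElem_cons_succ, List.getElem_cons_zero] at this
    omega
  · intro h
    have hlen : nu.rowLens.length = m - 1 := by
      rw [h]; simp; omega
    have h1lt : (1 : ℕ) < nu.rowLens.length := by omega
    have := @YoungDiagram.get_rowLens nu 1 h1lt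
    simp only [h, List.getElem_cons_succ, List.getElem_replicate] at this
    omega
end

section
/- Let $q \geq 2$, $n \geq 2$, and let $\lambda$ be a partition of $qn$ with exactly $n - 1$ parts such that the skew diagram $[\lambda \setminus \Omega]$ is a translate of the Young diagram of $(2, 1^{n-2})$ for some partition $\Omega \subset \lambda$ of $(q-1)n$. Then $\Omega = (u^{n-1})$ for some $u \in \mathbb{N}$, and consequently $qn = u(n-1) + n$, i.e., $n - 1$ divides $qn - n = (q-1)n$. -/
lemma memS (n i j : ℕ) : (i, j) ∈ cellsOfRowLens (2 :: List.replicate (n-2) 1) ↔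
    ((i = 0 ∧ j < 2) ∨ (1 ≤ i ∧ i < n - 1 ∧ j = 0)) := by
  simp only [cellsOfRowLens, Finset.mem_biUnion, Finset.mem_range, Finset.mem_image,
    List.length_cons, List.length_replicate, Prod.mk.injEq]
  constructor
  · rintro ⟨x, hx, y, hy, rfl, rfl⟩
    cases x with
    | zero => simp at hy; omega
    | succ k =>
      simp [List.getD_cons_succ] at hy
      rw [List.getElem?_replicate] at hy; split at hy <;> simp at hy <;> omega
  · rintro (⟨rfl, hj⟩ | ⟨h1, h2, rfl⟩)
    · exact ⟨0, by omega, j, by simpa using hj, rfl, rfl⟩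
    · refine ⟨i, by omega, 0, ?_, rfl, rfl⟩
      cases i with
      | zero => omega
      | succ k => rw [List.getD_cons_succ, List.getD_eq_getElem _ _ (by simp; omega)]; simp

/-- if `lam ⊢ qn` has exactly `n - 1` parts and `[lam \ Om]` is a translate of
the diagram of `(2, 1^(n-2))` for a partition `Om ⊂ lam` of `(q-1)n`, then `Om` is a
rectangle `(u^(n-1))`, so `qn = u(n-1) + n` and `n - 1` divides `(q-1)n`. -/
theorem stmt18 (q n : ℕ) (hq : 2 ≤ q) (hn : 2 ≤ n)
    (lam Om : YoungDiagram) (hlam : lam.card = q * n)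
    (hlen : lam.rowLens.length = n - 1)
    (hOmc : Om.card = (q - 1) * n) (hsub : Om < lam)
    (hskew : IsTranslateOf (lam.cells \ Om.cells)
      (cellsOfRowLens (2 :: List.replicate (n - 2) 1))) :
    ∃ u : ℕ, Om.rowLens = List.replicate (n - 1) u ∧
      q * n = u * (n - 1) + n ∧ (n - 1) ∣ (q - 1) * n := by
  obtain ⟨a, b, hab⟩ := hskew
  have hOmle : ∀ c : ℕ × ℕ, c ∈ Om → c ∈ lam := fun c hc =>
    (YoungDiagram.mem_cells _).mp (YoungDiagram.cells_subset_iff.mpr hsub.le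
      ((YoungDiagram.mem_cells _).mpr hc))
  have hcol : lam.colLen 0 = n - 1 := by
    rw [← YoungDiagram.length_rowLens, hlen]
  have hrowbd : ∀ i j : ℕ, (i, j) ∈ lam → i < n - 1 := by
    intro i j h
    have h0 : (i, 0) ∈ lam := lam.up_left_mem le_rfl (Nat.zero_le j) h
    rw [YoungDiagram.mem_iff_lt_colLen, hcol] at h0
    exact h0
  have hmem : ∀ i j : ℕ, ((i, j) ∈ lam ∧ (i, j) ∉ Om) ↔
      ((i = a ∧ (j = b ∨ j = b + 1)) ∨ (a + 1 ≤ i ∧ i < a + (n - 1) ∧ j = b)) := by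
    intro i j
    have h := Finset.ext_iff.mp hab (i, j)
    simp only [Finset.mem_sdiff, YoungDiagram.mem_cells, Finset.mem_image] at h
    rw [h]
    constructor
    · rintro ⟨⟨x, y⟩, hxy, heq⟩
      rw [memS] at hxy
      obtain ⟨rfl, rfl⟩ : x + a = i ∧ y + b = j := by
        simpa [Prod.ext_iff] using heq
      omega
    · rintro (⟨rfl, (rfl | rfl)⟩ | ⟨h1, h2, rfl⟩)
      · exact ⟨(0, 0), (memS n 0 0).mpr (by omega), by simp⟩
      · exact ⟨(0, 1), (memS n 0 1).mpr (by omega), by simp [Prod.ext_iff]; omega⟩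
      · exact ⟨(i - a, 0), (memS n (i - a) 0).mpr (by omega), by simp [Prod.ext_iff]; omega⟩
  have hab0 : (a, b) ∈ lam ∧ (a, b) ∉ Om := (hmem a b).mpr (Or.inl ⟨rfl, Or.inl rfl⟩)
  have ha : a = 0 := by
    rcases Nat.lt_or_ge n 3 with h3 | h3
    · have := hrowbd a b hab0.1; omega
    · have h2 := ((hmem (a + (n - 2)) b).mpr (Or.inr ⟨by omega, by omega, rfl⟩)).1
      have := hrowbd _ _ h2; omega
  subst ha
  -- membership characterization of Om
  have hOmub : ∀ i j : ℕ, (i, j) ∈ Om → j < b := by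
    intro i j h
    by_contra hge
    push_neg at hge
    have hib : (i, b) ∈ Om := Om.up_left_mem le_rfl hge h
    have hilam : (i, b) ∈ lam := hOmle _ hib
    have hi : i < n - 1 := hrowbd i b hilam
    have hsk : (i, b) ∈ lam ∧ (i, b) ∉ Om := by
      refine (hmem i b).mpr ?_
      rcases Nat.eq_zero_or_pos i with h0 | h0
      · exact Or.inl ⟨h0, Or.inl rfl⟩
      · exact Or.inr ⟨by omega, by omega, rfl⟩
    exact hsk.2 hib
  have hOmlb : ∀ i j : ℕ, i < n - 1 → j < b → (i, j) ∈ Om := by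
    intro i j hi hj
    have hiblam : (i, b) ∈ lam := by
      refine ((hmem i b).mpr ?_).1
      rcases Nat.eq_zero_or_pos i with h0 | h0
      · exact Or.inl ⟨h0, Or.inl rfl⟩
      · exact Or.inr ⟨by omega, by omega, rfl⟩
    have hijlam : (i, j) ∈ lam := lam.up_left_mem le_rfl (le_of_lt hj) hiblam
    by_contra hno
    have := (hmem i j).mp ⟨hijlam, hno⟩
    omega
  -- Om.cells as a product
  have hcells : Om.cells = Finset.range (n - 1) ×ˢ Finset.range b := by
    ext ⟨i, j⟩
    simp only [YoungDiagram.mem_cells, Finset.mem_product, Finset.mem_range]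
    constructor
    · intro h
      exact ⟨hrowbd i j (hOmle _ h), hOmub i j h⟩
    · rintro ⟨h1, h2⟩
      exact hOmlb i j h1 h2
  have hcard : (n - 1) * b = (q - 1) * n := by
    have := Om.card
    rw [← hOmc]
    show (n - 1) * b = Om.cells.card
    rw [hcells, Finset.card_product, Finset.card_range, Finset.card_range]
  have hbpos : 0 < b := by
    rcases Nat.eq_zero_or_pos b with h0 | h0
    · exfalso
      rw [h0, Nat.mul_zero] at hcard
      have : 0 < (q - 1) * n := Nat.mul_pos (by omega) (by omega)
      omega
    · exact h0
  -- row lengths of Om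
  have hOmcol : Om.colLen 0 = n - 1 := by
    have h1 : (n - 2, 0) ∈ Om := hOmlb _ _ (by omega) hbpos
    have h2 : (n - 1, 0) ∉ Om := fun h => by have := hrowbd _ _ (hOmle _ h); omega
    rw [YoungDiagram.mem_iff_lt_colLen] at h1
    rw [YoungDiagram.mem_iff_lt_colLen] at h2
    omega
  have hOmrow : ∀ i : ℕ, i < n - 1 → Om.rowLen i = b := by
    intro i hi
    have h1 : (i, b - 1) ∈ Om := hOmlb _ _ hi (by omega)
    have h2 : (i, b) ∉ Om := fun h => by have := hOmub _ _ h; omega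
    rw [YoungDiagram.mem_iff_lt_rowLen] at h1
    rw [YoungDiagram.mem_iff_lt_rowLen] at h2
    omega
  refine ⟨b, ?_, ?_, ⟨b, hcard.symm⟩⟩
  · rw [YoungDiagram.rowLens, hOmcol]
    refine List.eq_replicate_iff.mpr ⟨by simp, ?_⟩
    intro x hx
    rw [List.mem_map] at hx
    obtain ⟨i, hi, rfl⟩ := hx
    rw [List.mem_range] at hi
    exact hOmrow i hi
  · obtain ⟨q', rfl⟩ : ∃ q', q = q' + 1 := ⟨q - 1, by omega⟩
    have h1 : (q' + 1 - 1) * n = q' * n := by simp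
    rw [h1] at hcard
    have : b * (n - 1) = q' * n := by rw [Nat.mul_comm]; exact hcard
    calc (q' + 1) * n = q' * n + n := by ring
    _ = b * (n - 1) + n := by rw [this]
end
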